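/- arXiv:2411.11077 — 3 statements merged into one kernel-verified Lean document; each statement's English description precedes it below -/
import Mathlib

section
/- Let G be a finite weighted graph. For any nonempty proper subset A ⊆ V, setting x = 1_{A,A^c} (the vector equal to +1 on A and −1 on A^c) and μ = |∂A| / min{vol(A), vol(A^c)}, the pair (μ, x) is an eigenpair of the eigenproblem (★): 0 ∈ vol(V)·∂‖x‖_∞ − ∂I⁺(x) − μ·∂N(x). -/
open Finset

noncomputable section

variable {n : ℕ}

/-- Weighted degree `d_i = Σ_{j : {i,j} ∈ E} w_{ij}`. -/
def wdeg (G : SimpleGraph (Fin n)) [DecidableRel G.Adj] (w : Fin n → Fin n → ℝ) (i : Fin n) : ℝ :=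
  ∑ j, if G.Adj i j then w i j else 0

/-- `vol(A) = Σ_{i ∈ A} d_i`. -/
def volS (G : SimpleGraph (Fin n)) [DecidableRel G.Adj] (w : Fin n → Fin n → ℝ)
    (A : Finset (Fin n)) : ℝ :=
  ∑ i ∈ A, wdeg G w i

/-- `vol(V)`. -/
def volV (G : SimpleGraph (Fin n)) [DecidableRel G.Adj] (w : Fin n → Fin n → ℝ) : ℝ :=
  ∑ i, wdeg G w i

/-- `|E(A,B)|`: total weight of edges with one endpoint in `A` and the other in `B`
(each unordered crossing edge counted once when `A` and `B` are disjoint). -/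
def cutW (G : SimpleGraph (Fin n)) [DecidableRel G.Adj] (w : Fin n → Fin n → ℝ)
    (A B : Finset (Fin n)) : ℝ :=
  ∑ i ∈ A, ∑ j ∈ B, if G.Adj i j then w i j else 0

/-- `I⁺(x) = Σ_{{i,j} ∈ E} w_{ij} |x_i + x_j|`. -/
def Iplus (G : SimpleGraph (Fin n)) [DecidableRel G.Adj] (w : Fin n → Fin n → ℝ)
    (x : Fin n → ℝ) : ℝ :=
  (∑ i, ∑ j, if G.Adj i j then w i j * |x i + x j| else 0) / 2

/-- `N(x) = min_{t ∈ ℝ} Σ_i d_i |x_i − t|`. -/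
def Nfun (G : SimpleGraph (Fin n)) [DecidableRel G.Adj] (w : Fin n → Fin n → ℝ)
    (x : Fin n → ℝ) : ℝ :=
  ⨅ t : ℝ, ∑ i, wdeg G w i * |x i - t|

/-- The subdifferential `∂f(x) = {s | f(y) − f(x) ≥ ⟨s, y − x⟩ for all y}`. -/
def subdiff (f : (Fin n → ℝ) → ℝ) (x : Fin n → ℝ) : Set (Fin n → ℝ) :=
  {s | ∀ y : Fin n → ℝ, ∑ i, s i * (y i - x i) ≤ f y - f x}

/-- `(μ, x)` with `x ≠ 0` is an eigenpair of the eigenproblem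
`0 ∈ vol(V)·∂‖x‖_∞ − ∂I⁺(x) − μ·∂N(x)`. (Here `‖·‖` on `Fin n → ℝ` is the sup norm.) -/
def IsEigenStar (G : SimpleGraph (Fin n)) [DecidableRel G.Adj] (w : Fin n → Fin n → ℝ)
    (mu : ℝ) (x : Fin n → ℝ) : Prop :=
  x ≠ 0 ∧ ∃ u ∈ subdiff (fun y : Fin n → ℝ => ‖y‖) x,
    ∃ p ∈ subdiff (Iplus G w) x, ∃ s ∈ subdiff (Nfun G w) x,
      ∀ i, volV G w * u i - p i - mu * s i = 0

/-- Helper: membership in the subdifferential of the sup norm. -/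
lemma norm_subdiff_mem (x u : Fin n → ℝ) (hx : ∀ i, |x i| = 1)
    (h1 : ∀ i, 0 ≤ u i * x i) (h2 : ∑ i, u i * x i = 1) :
    u ∈ subdiff (fun y : Fin n → ℝ => ‖y‖) x := by
  have hne : Nonempty (Fin n) := by
    by_contra h
    rw [not_nonempty_iff] at h
    rw [Finset.univ_eq_empty, Finset.sum_empty] at h2
    norm_num at h2
  have hxn : ‖x‖ = 1 := by
    refine le_antisymm ?_ ?_
    · refine (pi_norm_le_iff_of_nonneg zero_le_one).2 fun i => ?_
      simp [Real.norm_eq_abs, hx i]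
    · obtain ⟨i⟩ := hne
      calc (1:ℝ) = |x i| := (hx i).symm
        _ ≤ ‖x‖ := by simpa [Real.norm_eq_abs] using norm_le_pi_norm x i
  intro y
  show ∑ i, u i * (y i - x i) ≤ ‖y‖ - ‖x‖
  have habs : ∀ i, |u i| = u i * x i := fun i => by
    have h : |u i * x i| = |u i| := by rw [abs_mul, hx i, mul_one]
    rw [← h, abs_of_nonneg (h1 i)]
  have hterm : ∀ i, u i * y i ≤ |u i| * ‖y‖ := fun i => by
    calc u i * y i ≤ |u i * y i| := le_abs_self _
      _ = |u i| * |y i| := abs_mul _ _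
      _ ≤ |u i| * ‖y‖ := by
          have h : |y i| ≤ ‖y‖ := by simpa [Real.norm_eq_abs] using norm_le_pi_norm y i
          exact mul_le_mul_of_nonneg_left h (abs_nonneg _)
  have hsum : ∑ i, u i * y i ≤ ‖y‖ := by
    calc ∑ i, u i * y i ≤ ∑ i, |u i| * ‖y‖ := Finset.sum_le_sum fun i _ => hterm i
      _ = (∑ i, |u i|) * ‖y‖ := (Finset.sum_mul _ _ _).symm
      _ = ‖y‖ := by
          have h : ∑ i, |u i| = 1 := by
            rw [Finset.sum_congr rfl fun i _ => habs i, h2]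
          rw [h, one_mul]
  have hsplit : ∑ i, u i * (y i - x i) = (∑ i, u i * y i) - ∑ i, u i * x i := by
    simp_rw [mul_sub]
    exact Finset.sum_sub_distrib _ _
  rw [hsplit, h2, hxn]
  linarith

lemma mul_div_min_self (vmin v : ℝ) (h0 : 0 ≤ vmin) (h1 : vmin ≤ v) :
    v * (vmin / v) = vmin := by
  rcases eq_or_ne v 0 with h | h
  · have : vmin = 0 := le_antisymm (h ▸ h1) h0
    simp [this, h]
  · rw [mul_comm, div_mul_cancel₀ _ h]

set_option maxHeartbeats 2000000 in
theorem stmt1 (G : SimpleGraph (Fin n)) [DecidableRel G.Adj] (w : Fin n → Fin n → ℝ)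
    (hsymm : ∀ i j, w i j = w j i)
    (hpos : ∀ i j, G.Adj i j → 0 < w i j)
    (A : Finset (Fin n)) (hA : A.Nonempty) (hAne : A ≠ Finset.univ) :
    IsEigenStar G w (cutW G w A Aᶜ / min (volS G w A) (volS G w Aᶜ))
      (fun i => if i ∈ A then (1 : ℝ) else -1) := by
  classical
  obtain ⟨i0, hi0⟩ := hA
  set a : Fin n → Fin n → ℝ := fun i j => if G.Adj i j then w i j else 0 with ha
  have ha_nonneg : ∀ i j, 0 ≤ a i j := fun i j => by
    rw [ha]; dsimp only
    split
    · exact le_of_lt (hpos i j (by assumption))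
    · exact le_refl 0
  have ha_symm : ∀ i j, a i j = a j i := fun i j => by
    rw [ha]; dsimp only
    by_cases h : G.Adj i j
    · rw [if_pos h, if_pos h.symm, hsymm]
    · rw [if_neg h, if_neg (fun h' => h h'.symm)]
  set x : Fin n → ℝ := fun i => if i ∈ A then (1:ℝ) else -1 with hxdef
  have hx1 : ∀ i, x i = 1 ∨ x i = -1 := fun i => by
    rw [hxdef]; dsimp only; split
    · exact Or.inl rfl
    · exact Or.inr rfl
  have hxabs : ∀ i, |x i| = 1 := fun i => by
    rcases hx1 i with h | h <;> rw [h] <;> norm_num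
  have hwdeg : ∀ i, wdeg G w i = ∑ j, a i j := fun i => rfl
  have hd0 : ∀ i, 0 ≤ wdeg G w i := fun i => by
    rw [hwdeg]; exact Finset.sum_nonneg fun j _ => ha_nonneg i j
  set vA := volS G w A with hvAdef
  set vB := volS G w Aᶜ with hvBdef
  set m := min vA vB with hmdef
  set C := cutW G w A Aᶜ with hCdef
  set μ := C / m with hμdef
  have hvA' : vA = ∑ i ∈ A, wdeg G w i := rfl
  have hvB' : vB = ∑ i ∈ Aᶜ, wdeg G w i := rfl
  have hC' : C = ∑ i ∈ A, ∑ j ∈ Aᶜ, a i j := rfl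
  have hvA0 : 0 ≤ vA := by rw [hvA']; exact Finset.sum_nonneg fun i _ => hd0 i
  have hvB0 : 0 ≤ vB := by rw [hvB']; exact Finset.sum_nonneg fun i _ => hd0 i
  have hm0 : 0 ≤ m := le_min hvA0 hvB0
  have hmA : m ≤ vA := min_le_left _ _
  have hmB : m ≤ vB := min_le_right _ _
  have hC0 : 0 ≤ C := by
    rw [hC']
    exact Finset.sum_nonneg fun i _ => Finset.sum_nonneg fun j _ => ha_nonneg i j
  have hmu0 : 0 ≤ μ := div_nonneg hC0 hm0
  have hSBA : ∑ i ∈ Aᶜ, ∑ j ∈ A, a i j = ∑ i ∈ A, ∑ j ∈ Aᶜ, a i j := by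
    rw [Finset.sum_comm]
    exact Finset.sum_congr rfl fun i _ => Finset.sum_congr rfl fun j _ => ha_symm j i
  have hvA_split : vA = ∑ i ∈ A, ∑ j ∈ A, a i j + ∑ i ∈ A, ∑ j ∈ Aᶜ, a i j := by
    rw [hvA', ← Finset.sum_add_distrib]
    exact Finset.sum_congr rfl fun i _ => by
      rw [hwdeg, ← Finset.sum_add_sum_compl A (a i)]
  have hvB_split : vB = ∑ i ∈ Aᶜ, ∑ j ∈ A, a i j + ∑ i ∈ Aᶜ, ∑ j ∈ Aᶜ, a i j := by
    rw [hvB', ← Finset.sum_add_distrib]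
    exact Finset.sum_congr rfl fun i _ => by
      rw [hwdeg, ← Finset.sum_add_sum_compl A (a i)]
  have hSAA0 : 0 ≤ ∑ i ∈ A, ∑ j ∈ A, a i j :=
    Finset.sum_nonneg fun i _ => Finset.sum_nonneg fun j _ => ha_nonneg i j
  have hSBB0 : 0 ≤ ∑ i ∈ Aᶜ, ∑ j ∈ Aᶜ, a i j :=
    Finset.sum_nonneg fun i _ => Finset.sum_nonneg fun j _ => ha_nonneg i j
  have hCm : C ≤ m := by
    refine le_min ?_ ?_
    · rw [hC']; linarith [hvA_split, hSAA0]
    · rw [hC', ← hSBA]; linarith [hvB_split, hSBB0]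
  have hmum : μ * m = C := by
    rcases eq_or_ne m 0 with h | h
    · have hcz : C = 0 := le_antisymm (h ▸ hCm) hC0
      rw [h, hcz, mul_zero]
    · rw [hμdef]; exact div_mul_cancel₀ C h
  have hvolV : volV G w = vA + vB := (Finset.sum_add_sum_compl A (wdeg G w)).symm
  have hvolV0 : 0 ≤ volV G w := by rw [hvolV]; linarith
  set s : Fin n → ℝ :=
    fun i => if i ∈ A then wdeg G w i * (m / vA) else -(wdeg G w i * (m / vB)) with hsdef
  set p : Fin n → ℝ := fun i => ∑ j, a i j * ((x i + x j) / 2) with hpdef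
  have hdivA0 : 0 ≤ m / vA := div_nonneg hm0 hvA0
  have hdivB0 : 0 ≤ m / vB := div_nonneg hm0 hvB0
  have hdivA1 : m / vA ≤ 1 := by
    rcases eq_or_ne vA 0 with h | h
    · rw [h, div_zero]; norm_num
    · exact (div_le_one (lt_of_le_of_ne hvA0 (Ne.symm h))).2 hmA
  have hdivB1 : m / vB ≤ 1 := by
    rcases eq_or_ne vB 0 with h | h
    · rw [h, div_zero]; norm_num
    · exact (div_le_one (lt_of_le_of_ne hvB0 (Ne.symm h))).2 hmB
  have hsum_s : ∑ i, s i = 0 := by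
    rw [← Finset.sum_add_sum_compl A s]
    have e1 : ∑ i ∈ A, s i = vA * (m / vA) := by
      have h : ∀ i ∈ A, s i = wdeg G w i * (m / vA) := fun i hi => by
        rw [hsdef]; dsimp only; rw [if_pos hi]
      rw [Finset.sum_congr rfl h, ← Finset.sum_mul, ← hvA']
    have e2 : ∑ i ∈ Aᶜ, s i = -(vB * (m / vB)) := by
      have h : ∀ i ∈ Aᶜ, s i = -(wdeg G w i * (m / vB)) := fun i hi => by
        rw [hsdef]; dsimp only; rw [if_neg (Finset.mem_compl.1 hi)]
      rw [Finset.sum_congr rfl h, Finset.sum_neg_distrib, ← Finset.sum_mul, ← hvB']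
    rw [e1, e2, mul_div_min_self m vA hm0 hmA, mul_div_min_self m vB hm0 hmB]
    ring
  have hsx : ∑ i, s i * x i = 2 * m := by
    rw [← Finset.sum_add_sum_compl A (fun i => s i * x i)]
    have e1 : ∑ i ∈ A, s i * x i = vA * (m / vA) := by
      have h : ∀ i ∈ A, s i * x i = wdeg G w i * (m / vA) := fun i hi => by
        rw [hsdef, hxdef]; dsimp only; rw [if_pos hi, if_pos hi, mul_one]
      rw [Finset.sum_congr rfl h, ← Finset.sum_mul, ← hvA']
    have e2 : ∑ i ∈ Aᶜ, s i * x i = vB * (m / vB) := by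
      have h : ∀ i ∈ Aᶜ, s i * x i = wdeg G w i * (m / vB) := fun i hi => by
        have hi' := Finset.mem_compl.1 hi
        rw [hsdef, hxdef]; dsimp only; rw [if_neg hi', if_neg hi']; ring
      rw [Finset.sum_congr rfl h, ← Finset.sum_mul, ← hvB']
    rw [e1, e2, mul_div_min_self m vA hm0 hmA, mul_div_min_self m vB hm0 hmB]
    ring
  have hsx0 : ∀ i, 0 ≤ s i * x i := fun i => by
    by_cases hi : i ∈ A
    · rw [hsdef, hxdef]; dsimp only; rw [if_pos hi, if_pos hi, mul_one]
      exact mul_nonneg (hd0 i) hdivA0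
    · rw [hsdef, hxdef]; dsimp only; rw [if_neg hi, if_neg hi]
      have h := mul_nonneg (hd0 i) hdivB0
      nlinarith
  have habs_s : ∀ i, |s i| ≤ wdeg G w i := fun i => by
    by_cases hi : i ∈ A
    · rw [hsdef]; dsimp only; rw [if_pos hi, abs_of_nonneg (mul_nonneg (hd0 i) hdivA0)]
      calc wdeg G w i * (m / vA) ≤ wdeg G w i * 1 :=
            mul_le_mul_of_nonneg_left hdivA1 (hd0 i)
        _ = wdeg G w i := mul_one _
    · rw [hsdef]; dsimp only
      rw [if_neg hi, abs_neg, abs_of_nonneg (mul_nonneg (hd0 i) hdivB0)]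
      calc wdeg G w i * (m / vB) ≤ wdeg G w i * 1 :=
            mul_le_mul_of_nonneg_left hdivB1 (hd0 i)
        _ = wdeg G w i := mul_one _
  have hbdd : ∀ y : Fin n → ℝ, BddBelow (Set.range fun t => ∑ i, wdeg G w i * |y i - t|) := by
    intro y
    refine ⟨0, ?_⟩
    rintro r ⟨t, rfl⟩
    exact Finset.sum_nonneg fun i _ => mul_nonneg (hd0 i) (abs_nonneg _)
  have hNle : ∀ (y : Fin n → ℝ) (t : ℝ), Nfun G w y ≤ ∑ i, wdeg G w i * |y i - t| :=
    fun y t => ciInf_le (hbdd y) t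
  have hNge : ∀ (y : Fin n → ℝ) (c : ℝ),
      (∀ t : ℝ, c ≤ ∑ i, wdeg G w i * |y i - t|) → c ≤ Nfun G w y :=
    fun y c h => le_ciInf h
  have hval : ∀ t : ℝ, ∑ i, wdeg G w i * |x i - t| = vA * |1 - t| + vB * |1 + t| := by
    intro t
    rw [← Finset.sum_add_sum_compl A (fun i => wdeg G w i * |x i - t|)]
    congr 1
    · have h : ∀ i ∈ A, wdeg G w i * |x i - t| = wdeg G w i * |1 - t| := fun i hi => by
        rw [hxdef]; dsimp only; rw [if_pos hi]
      rw [Finset.sum_congr rfl h, ← Finset.sum_mul, ← hvA']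
    · have h : ∀ i ∈ Aᶜ, wdeg G w i * |x i - t| = wdeg G w i * |1 + t| := fun i hi => by
        rw [hxdef]; dsimp only; rw [if_neg (Finset.mem_compl.1 hi)]
        rw [show (-1 : ℝ) - t = -(1 + t) by ring, abs_neg]
      rw [Finset.sum_congr rfl h, ← Finset.sum_mul, ← hvB']
  have hNx : Nfun G w x = 2 * m := by
    refine le_antisymm ?_ ?_
    · have h1 := hNle x (-1)
      have h2 := hNle x 1
      rw [hval (-1)] at h1
      rw [hval 1] at h2
      norm_num at h1 h2
      rcases le_total vA vB with h | h
      · rw [hmdef, min_eq_left h]; linarith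
      · rw [hmdef, min_eq_right h]; linarith
    · refine hNge x _ fun t => ?_
      rw [hval t]
      have h1 : m * |1 - t| ≤ vA * |1 - t| :=
        mul_le_mul_of_nonneg_right hmA (abs_nonneg _)
      have h2 : m * |1 + t| ≤ vB * |1 + t| :=
        mul_le_mul_of_nonneg_right hmB (abs_nonneg _)
      have h3 : (2:ℝ) ≤ |1 - t| + |1 + t| := by
        have h := abs_add_le (1 - t) (1 + t)
        norm_num at h
        linarith
      nlinarith [mul_le_mul_of_nonneg_left h3 hm0]
  have hNy : ∀ y : Fin n → ℝ, ∑ i, s i * y i ≤ Nfun G w y := by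
    intro y
    refine hNge y _ fun t => ?_
    have heq : ∑ i, s i * y i = ∑ i, s i * (y i - t) := by
      simp_rw [mul_sub]
      rw [Finset.sum_sub_distrib, ← Finset.sum_mul, hsum_s, zero_mul, sub_zero]
    rw [heq]
    refine Finset.sum_le_sum fun i _ => ?_
    calc s i * (y i - t) ≤ |s i * (y i - t)| := le_abs_self _
      _ = |s i| * |y i - t| := abs_mul _ _
      _ ≤ wdeg G w i * |y i - t| :=
          mul_le_mul_of_nonneg_right (habs_s i) (abs_nonneg _)
  have hs_mem : s ∈ subdiff (Nfun G w) x := by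
    intro y
    have heq : ∑ i, s i * (y i - x i) = (∑ i, s i * y i) - ∑ i, s i * x i := by
      simp_rw [mul_sub]
      exact Finset.sum_sub_distrib _ _
    rw [heq, hsx, hNx]
    linarith [hNy y]
  have hIp : ∀ z : Fin n → ℝ, Iplus G w z = (∑ i, ∑ j, a i j * |z i + z j|) / 2 := by
    intro z
    rw [Iplus]
    congr 1
    refine Finset.sum_congr rfl fun i _ => Finset.sum_congr rfl fun j _ => ?_
    rw [ha]; dsimp only
    by_cases h : G.Adj i j
    · rw [if_pos h, if_pos h]
    · rw [if_neg h, if_neg h, zero_mul]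
  have hx2 : ∀ i j, (x i + x j) / 2 * (x i + x j) = |x i + x j| := fun i j => by
    rcases hx1 i with h | h <;> rcases hx1 j with h' | h' <;> rw [h, h'] <;> norm_num
  have hxle : ∀ i j (r : ℝ), (x i + x j) / 2 * r ≤ |r| := fun i j r => by
    rcases hx1 i with h | h <;> rcases hx1 j with h' | h' <;> rw [h, h'] <;>
      norm_num [le_abs_self, neg_le_abs, abs_nonneg]
  have hT : ∀ y : Fin n → ℝ,
      ∑ i, ∑ j, a i j * ((x i + x j) / 2) * (y i - x i)
        = ∑ i, ∑ j, a i j * ((x i + x j) / 2) * (y j - x j) := by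
    intro y
    rw [Finset.sum_comm]
    exact Finset.sum_congr rfl fun i _ => Finset.sum_congr rfl fun j _ => by
      rw [ha_symm j i, add_comm (x j) (x i)]
  have hp_mem : p ∈ subdiff (Iplus G w) x := by
    intro y
    rw [hIp y, hIp x]
    have expand : ∑ i, p i * (y i - x i)
        = ∑ i, ∑ j, a i j * ((x i + x j) / 2) * (y i - x i) := by
      refine Finset.sum_congr rfl fun i _ => ?_
      rw [hpdef]; dsimp only
      rw [Finset.sum_mul]
    rw [expand]
    have key : ∀ i j, a i j * ((x i + x j) / 2) * (y i - x i)
        + a i j * ((x i + x j) / 2) * (y j - x j)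
        ≤ a i j * |y i + y j| - a i j * |x i + x j| := fun i j => by
      have h1 : a i j * ((x i + x j) / 2 * (x i + x j)) = a i j * |x i + x j| := by
        rw [hx2 i j]
      have h2 : a i j * ((x i + x j) / 2 * (y i + y j)) ≤ a i j * |y i + y j| :=
        mul_le_mul_of_nonneg_left (hxle i j (y i + y j)) (ha_nonneg i j)
      nlinarith [h1, h2]
    have hsum_le : (∑ i, ∑ j, a i j * ((x i + x j) / 2) * (y i - x i))
        + (∑ i, ∑ j, a i j * ((x i + x j) / 2) * (y i - x i))
        ≤ (∑ i, ∑ j, a i j * |y i + y j|) - ∑ i, ∑ j, a i j * |x i + x j| := by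
      nth_rewrite 2 [hT y]
      rw [← Finset.sum_sub_distrib, ← Finset.sum_add_distrib]
      refine Finset.sum_le_sum fun i _ => ?_
      rw [← Finset.sum_sub_distrib, ← Finset.sum_add_distrib]
      exact Finset.sum_le_sum fun j _ => key i j
    linarith
  have hpx : ∀ i, p i * x i = ∑ j, a i j * ((1 + x i * x j) / 2) := fun i => by
    rw [hpdef]; dsimp only
    rw [Finset.sum_mul]
    refine Finset.sum_congr rfl fun j _ => ?_
    rcases hx1 i with h | h <;> rw [h] <;> ring
  have hfac0 : ∀ i j, 0 ≤ (1 + x i * x j) / 2 := fun i j => by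
    rcases hx1 i with h | h <;> rcases hx1 j with h' | h' <;> rw [h, h'] <;> norm_num
  have hpx0 : ∀ i, 0 ≤ p i * x i := fun i => by
    rw [hpx i]
    exact Finset.sum_nonneg fun j _ => mul_nonneg (ha_nonneg i j) (hfac0 i j)
  have hsum_px : ∑ i, p i * x i = volV G w - 2 * C := by
    have step : ∑ i, p i * x i
        = ∑ i ∈ A, ∑ j ∈ A, a i j + ∑ i ∈ Aᶜ, ∑ j ∈ Aᶜ, a i j := by
      rw [Finset.sum_congr rfl fun i _ => hpx i,
        ← Finset.sum_add_sum_compl A (fun i => ∑ j, a i j * ((1 + x i * x j) / 2))]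
      congr 1
      · refine Finset.sum_congr rfl fun i hi => ?_
        rw [← Finset.sum_add_sum_compl A (fun j => a i j * ((1 + x i * x j) / 2))]
        have e1 : ∑ j ∈ A, a i j * ((1 + x i * x j) / 2) = ∑ j ∈ A, a i j :=
          Finset.sum_congr rfl fun j hj => by
            rw [hxdef]; dsimp only; rw [if_pos hi, if_pos hj]; norm_num
        have e2 : ∑ j ∈ Aᶜ, a i j * ((1 + x i * x j) / 2) = 0 :=
          Finset.sum_eq_zero fun j hj => by
            rw [hxdef]; dsimp only
            rw [if_pos hi, if_neg (Finset.mem_compl.1 hj)]; norm_num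
        rw [e1, e2, add_zero]
      · refine Finset.sum_congr rfl fun i hi => ?_
        have hi' := Finset.mem_compl.1 hi
        rw [← Finset.sum_add_sum_compl A (fun j => a i j * ((1 + x i * x j) / 2))]
        have e1 : ∑ j ∈ A, a i j * ((1 + x i * x j) / 2) = 0 :=
          Finset.sum_eq_zero fun j hj => by
            rw [hxdef]; dsimp only; rw [if_neg hi', if_pos hj]; norm_num
        have e2 : ∑ j ∈ Aᶜ, a i j * ((1 + x i * x j) / 2) = ∑ j ∈ Aᶜ, a i j :=
          Finset.sum_congr rfl fun j hj => by
            rw [hxdef]; dsimp only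
            rw [if_neg hi', if_neg (Finset.mem_compl.1 hj)]; norm_num
        rw [e1, e2, zero_add]
    rw [step, hvolV, hC', hvA_split, hvB_split, hSBA]
    ring
  have hx_ne : x ≠ 0 := by
    intro hcontra
    have h := congrFun hcontra i0
    rw [hxdef] at h; dsimp only at h
    rw [if_pos hi0] at h
    norm_num at h
  refine ⟨hx_ne, ?_⟩
  by_cases hV : volV G w = 0
  · have hdz : ∀ i, wdeg G w i = 0 := by
      have h := (Finset.sum_eq_zero_iff_of_nonneg (fun i _ => hd0 i)).1 hV
      exact fun i => h i (Finset.mem_univ i)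
    have haz : ∀ i j, a i j = 0 := fun i j => by
      have h : ∑ j, a i j = 0 := by rw [← hwdeg i]; exact hdz i
      exact (Finset.sum_eq_zero_iff_of_nonneg (fun j _ => ha_nonneg i j)).1 h j
        (Finset.mem_univ j)
    have hp0 : ∀ i, p i = 0 := fun i => by
      rw [hpdef]; dsimp only
      exact Finset.sum_eq_zero fun j _ => by rw [haz, zero_mul]
    have hs0 : ∀ i, s i = 0 := fun i => by
      rw [hsdef]; dsimp only
      simp [hdz i]
    set u : Fin n → ℝ := fun i => if i = i0 then (1:ℝ) else 0 with hudef
    have h1 : ∀ i, 0 ≤ u i * x i := fun i => by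
      rw [hudef, hxdef]; dsimp only
      by_cases h : i = i0
      · rw [if_pos h, one_mul, h, if_pos hi0]; norm_num
      · rw [if_neg h, zero_mul]
    have h2 : ∑ i, u i * x i = 1 := by
      rw [hudef]; dsimp only
      rw [Finset.sum_eq_single i0]
      · rw [if_pos rfl, one_mul, hxdef]; dsimp only; rw [if_pos hi0]
      · intro b _ hb; rw [if_neg hb, zero_mul]
      · intro h; exact absurd (Finset.mem_univ i0) h
    refine ⟨u, norm_subdiff_mem x u hxabs h1 h2, p, hp_mem, s, hs_mem, fun i => ?_⟩
    rw [hV, hp0 i, hs0 i, zero_mul, mul_zero]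
    ring
  · have hVpos : 0 < volV G w := lt_of_le_of_ne hvolV0 (Ne.symm hV)
    set u : Fin n → ℝ := fun i => (p i + μ * s i) / volV G w with hudef
    have h1 : ∀ i, 0 ≤ u i * x i := fun i => by
      have e : u i * x i = (p i * x i + μ * (s i * x i)) / volV G w := by
        rw [hudef]; dsimp only; ring
      rw [e]
      exact div_nonneg (add_nonneg (hpx0 i) (mul_nonneg hmu0 (hsx0 i))) hvolV0
    have h2 : ∑ i, u i * x i = 1 := by
      have e : ∀ i, u i * x i = (p i * x i + μ * (s i * x i)) / volV G w := fun i => by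
        rw [hudef]; dsimp only; ring
      rw [Finset.sum_congr rfl fun i _ => e i, ← Finset.sum_div,
        Finset.sum_add_distrib, ← Finset.mul_sum, hsum_px, hsx]
      have e2 : volV G w - 2 * C + μ * (2 * m) = volV G w := by
        have : μ * (2 * m) = 2 * C := by
          have h := hmum
          nlinarith [hmum]
        linarith
      rw [e2, div_self hV]
    refine ⟨u, norm_subdiff_mem x u hxabs h1 h2, p, hp_mem, s, hs_mem, fun i => ?_⟩
    rw [hudef]; dsimp only
    rw [mul_comm, div_mul_cancel₀ _ hV]
    ring
end
end

section
/- Let G be a connected finite weighted graph. Suppose μ is the smallest nonzero eigenvalue of the eigenproblem (★): 0 ∈ vol(V)·∂‖x‖_∞ − ∂I⁺(x) − μ·∂N(x), and x is a corresponding eigenvector. Then the support {i ∈ V : x_i ≠ 0} is a vertex cover of G. -/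
open Finset

noncomputable section

variable {n : ℕ}

namespace VCAux

variable {n : ℕ}

def sgn (r : ℝ) : ℝ := if r < 0 then -1 else if 0 < r then 1 else 0

lemma sgn_mul_self (r : ℝ) : sgn r * r = |r| := by
  unfold sgn
  rcases lt_trichotomy r 0 with h | h | h
  · simp [h, abs_of_neg h, not_lt.mpr h.le]
  · simp [h]
  · simp [abs_of_pos h, h, not_lt.mpr h.le]

lemma abs_sgn_le (r : ℝ) : |sgn r| ≤ 1 := by
  unfold sgn
  rcases lt_trichotomy r 0 with h | h | h <;> simp [h, not_lt.mpr h.le] <;> norm_num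

lemma sgn_mul_le (r a : ℝ) : sgn r * a ≤ |a| := by
  calc sgn r * a ≤ |sgn r * a| := le_abs_self _
    _ = |sgn r| * |a| := abs_mul _ _
    _ ≤ 1 * |a| := mul_le_mul_of_nonneg_right (abs_sgn_le r) (abs_nonneg a)
    _ = |a| := one_mul _

lemma abs_sub_abs_ge_sgn (a b : ℝ) : sgn b * (a - b) ≤ |a| - |b| := by
  have h1 := sgn_mul_le b a
  have h2 := sgn_mul_self b
  nlinarith

def Phi (d y : Fin n → ℝ) (t : ℝ) : ℝ := ∑ i, d i * |y i - t|

lemma Phi_nonneg {d y : Fin n → ℝ} {t : ℝ} (hd : ∀ i, 0 ≤ d i) : 0 ≤ Phi d y t :=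
  sum_nonneg fun i _ => mul_nonneg (hd i) (abs_nonneg _)

lemma exists_breakpoint (d y : Fin n → ℝ) (hd : ∀ i, 0 ≤ d i) (i0 : Fin n) (t : ℝ) :
    ∃ k, Phi d y (y k) ≤ Phi d y t := by
  classical
  set S : Finset (Fin n) := univ.filter (fun i => y i ≤ t) with hS
  have hsplit : ∀ g : Fin n → ℝ, ∑ i, g i
      = ∑ i ∈ S, g i + ∑ i ∈ univ.filter (fun i => ¬ y i ≤ t), g i := by
    intro g; rw [hS, sum_filter_add_sum_filter_not]
  set S' : Finset (Fin n) := univ.filter (fun i => ¬ y i ≤ t) with hS'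
  by_cases hcmp : ∑ i ∈ S', d i ≤ ∑ i ∈ S, d i
  · rcases S.eq_empty_or_nonempty with hSe | hSne
    · -- S empty: Dle = 0, so Dgt = 0, all d zero on S' hence Phi const
      have hDle : ∑ i ∈ S, d i = 0 := by rw [hSe]; simp
      have hDgt0 : ∑ i ∈ S', d i = 0 :=
        le_antisymm (hDle ▸ hcmp) (sum_nonneg fun i _ => hd i)
      have hz : ∀ i ∈ S', d i = 0 := by
        intro i hi
        exact (sum_eq_zero_iff_of_nonneg (fun i _ => hd i)).mp hDgt0 i hi
      have hall : ∀ i : Fin n, d i = 0 := by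
        intro i
        by_cases h : y i ≤ t
        · exfalso; have : i ∈ S := by simp [hS, h]
          rw [hSe] at this; simp at this
        · exact hz i (by simp only [hS', mem_filter, mem_univ, true_and]; exact h)
      refine ⟨i0, le_of_eq ?_⟩
      unfold Phi; simp [hall]
    · obtain ⟨k0, hk0S, hk0max⟩ := S.exists_max_image y hSne
      have hl : y k0 ≤ t := (mem_filter.mp hk0S).2
      refine ⟨k0, ?_⟩
      have hPt : Phi d y t = ∑ i ∈ S, d i * (t - y i) + ∑ i ∈ S', d i * (y i - t) := by
        rw [Phi, hsplit]
        congr 1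
        · exact sum_congr rfl fun i hi => by
            rw [abs_of_nonpos (by linarith [(mem_filter.mp hi).2])]; ring
        · exact sum_congr rfl fun i hi => by
            have := (mem_filter.mp hi).2
            rw [abs_of_pos (by push_neg at this; linarith)]
      have hPl : Phi d y (y k0) = ∑ i ∈ S, d i * (y k0 - y i) + ∑ i ∈ S', d i * (y i - y k0) := by
        rw [Phi, hsplit]
        congr 1
        · exact sum_congr rfl fun i hi => by
            rw [abs_of_nonpos (by linarith [hk0max i hi])]; ring
        · exact sum_congr rfl fun i hi => by
            have := (mem_filter.mp hi).2
            rw [abs_of_pos (by push_neg at this; linarith)]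
      rw [hPt, hPl]
      have e1 : ∑ i ∈ S, d i * (t - y i) - ∑ i ∈ S, d i * (y k0 - y i)
          = (∑ i ∈ S, d i) * (t - y k0) := by
        rw [← sum_sub_distrib, sum_mul]
        exact sum_congr rfl fun i hi => by ring
      have e2 : ∑ i ∈ S', d i * (y i - t) - ∑ i ∈ S', d i * (y i - y k0)
          = (∑ i ∈ S', d i) * (y k0 - t) := by
        rw [← sum_sub_distrib, sum_mul]
        exact sum_congr rfl fun i hi => by ring
      nlinarith [e1, e2]
  · push_neg at hcmp
    have hS'ne : S'.Nonempty := by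
      by_contra hc
      rw [not_nonempty_iff_eq_empty] at hc
      rw [hc] at hcmp; simp at hcmp
      exact absurd hcmp (not_lt.mpr (sum_nonneg fun i _ => hd i))
    obtain ⟨k0, hk0S, hk0min⟩ := S'.exists_min_image y hS'ne
    have hr : t < y k0 := by
      have := (mem_filter.mp hk0S).2; push_neg at this; exact this
    refine ⟨k0, ?_⟩
    have hPt : Phi d y t = ∑ i ∈ S, d i * (t - y i) + ∑ i ∈ S', d i * (y i - t) := by
      rw [Phi, hsplit]
      congr 1
      · exact sum_congr rfl fun i hi => by
          rw [abs_of_nonpos (by linarith [(mem_filter.mp hi).2])]; ring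
      · exact sum_congr rfl fun i hi => by
          have := (mem_filter.mp hi).2
          rw [abs_of_pos (by push_neg at this; linarith)]
    have hPr : Phi d y (y k0) = ∑ i ∈ S, d i * (y k0 - y i) + ∑ i ∈ S', d i * (y i - y k0) := by
      rw [Phi, hsplit]
      congr 1
      · exact sum_congr rfl fun i hi => by
          rw [abs_of_nonpos (by linarith [(mem_filter.mp hi).2, hr.le])]; ring
      · exact sum_congr rfl fun i hi => by
          rw [abs_of_nonneg (by linarith [hk0min i hi])]
    rw [hPt, hPr]
    have e1 : ∑ i ∈ S, d i * (y k0 - y i) - ∑ i ∈ S, d i * (t - y i)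
        = (∑ i ∈ S, d i) * (y k0 - t) := by
      rw [← sum_sub_distrib, sum_mul]
      exact sum_congr rfl fun i hi => by ring
    have e2 : ∑ i ∈ S', d i * (y i - y k0) - ∑ i ∈ S', d i * (y i - t)
        = (∑ i ∈ S', d i) * (t - y k0) := by
      rw [← sum_sub_distrib, sum_mul]
      exact sum_congr rfl fun i hi => by ring
    nlinarith [e1, e2]





def Ninf (d y : Fin n → ℝ) : ℝ := ⨅ t : ℝ, Phi d y t

lemma Ninf_bdd {d y : Fin n → ℝ} (hd : ∀ i, 0 ≤ d i) : BddBelow (Set.range (Phi d y)) :=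
  ⟨0, by rintro v ⟨t, rfl⟩; exact Phi_nonneg hd⟩

lemma Ninf_le {d y : Fin n → ℝ} (hd : ∀ i, 0 ≤ d i) (t : ℝ) : Ninf d y ≤ Phi d y t :=
  ciInf_le (Ninf_bdd hd) t

lemma Ninf_nonneg {d y : Fin n → ℝ} (hd : ∀ i, 0 ≤ d i) : 0 ≤ Ninf d y :=
  le_ciInf fun _ => Phi_nonneg hd

lemma Ninf_attained {d y : Fin n → ℝ} (hd : ∀ i, 0 ≤ d i) (i0 : Fin n) :
    ∃ tstar : ℝ, Ninf d y = Phi d y tstar ∧ (∀ t, Phi d y tstar ≤ Phi d y t)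
      ∧ ∃ k, tstar = y k := by
  obtain ⟨kst, -, hkmin⟩ := Finset.exists_min_image univ (fun k => Phi d y (y k))
    ⟨i0, mem_univ i0⟩
  have hmin : ∀ t, Phi d y (y kst) ≤ Phi d y t := by
    intro t
    obtain ⟨k, hk⟩ := exists_breakpoint d y hd i0 t
    exact (hkmin k (mem_univ k)).trans hk
  exact ⟨y kst, le_antisymm (Ninf_le hd _) (le_ciInf hmin), hmin, kst, rfl⟩

lemma Phi_smul {d y : Fin n → ℝ} {c t : ℝ} (hc : 0 ≤ c) :
    Phi d (fun i => c * y i) (c * t) = c * Phi d y t := by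
  unfold Phi
  rw [mul_sum]
  refine sum_congr rfl fun i _ => ?_
  rw [show c * y i - c * t = c * (y i - t) by ring, abs_mul, abs_of_nonneg hc]
  ring

lemma Ninf_smul {d y : Fin n → ℝ} {c : ℝ} (hd : ∀ i, 0 ≤ d i) (i0 : Fin n) (hc : 0 ≤ c) :
    Ninf d (fun i => c * y i) = c * Ninf d y := by
  rcases eq_or_lt_of_le hc with rfl | hc'
  · have h0 : Phi d (fun i => (0:ℝ) * y i) (0 * 0) = 0 := by
      rw [Phi_smul le_rfl]; ring
    refine le_antisymm ?_ ?_
    · calc Ninf d (fun i => (0:ℝ) * y i) ≤ Phi d (fun i => (0:ℝ) * y i) (0 * 0) :=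
            Ninf_le hd _
        _ = 0 * Ninf d y := by rw [h0]; ring
    · rw [zero_mul]; exact Ninf_nonneg hd
  · refine le_antisymm ?_ ?_
    · obtain ⟨t1, ht1, -, -⟩ := Ninf_attained hd i0 (y := y)
      calc Ninf d (fun i => c * y i) ≤ Phi d (fun i => c * y i) (c * t1) := Ninf_le hd _
        _ = c * Phi d y t1 := Phi_smul hc
        _ = c * Ninf d y := by rw [ht1]
    · obtain ⟨t2, ht2, -, -⟩ := Ninf_attained hd i0 (y := fun i => c * y i)
      have : Ninf d y ≤ Phi d y (t2 / c) := Ninf_le hd _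
      have h2 : Phi d (fun i => c * y i) (c * (t2 / c)) = c * Phi d y (t2 / c) := Phi_smul hc
      rw [mul_div_cancel₀ _ (ne_of_gt hc')] at h2
      calc c * Ninf d y ≤ c * Phi d y (t2 / c) := by gcongr
        _ = Phi d (fun i => c * y i) t2 := h2.symm
        _ = Ninf d (fun i => c * y i) := ht2.symm

lemma Phi_neg {d y : Fin n → ℝ} {t : ℝ} : Phi d (fun i => -y i) (-t) = Phi d y t := by
  unfold Phi
  refine sum_congr rfl fun i _ => ?_
  rw [show -y i - -t = -(y i - t) by ring, abs_neg]

lemma Ninf_neg {d y : Fin n → ℝ} (hd : ∀ i, 0 ≤ d i) (i0 : Fin n) :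
    Ninf d (fun i => -y i) = Ninf d y := by
  refine le_antisymm ?_ ?_
  · obtain ⟨t1, ht1, -, -⟩ := Ninf_attained hd i0 (y := y)
    calc Ninf d (fun i => -y i) ≤ Phi d (fun i => -y i) (-t1) := Ninf_le hd _
      _ = Phi d y t1 := Phi_neg
      _ = Ninf d y := ht1.symm
  · obtain ⟨t2, ht2, -, -⟩ := Ninf_attained hd i0 (y := fun i => -y i)
    have : Phi d (fun i => -(-y i)) (- -t2) = Phi d (fun i => -y i) (-t2) := Phi_neg (y := fun i => -y i)
    calc Ninf d y ≤ Phi d y (-t2) := Ninf_le hd _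
      _ = Phi d (fun i => -y i) t2 := by
          rw [← Phi_neg (y := y) (t := -t2)]; simp
      _ = Ninf d (fun i => -y i) := ht2.symm

lemma Ninf_pos_ne_const {d y : Fin n → ℝ} (hd : ∀ i, 0 < d i) (i0 : Fin n)
    (hy : Ninf d y = 0) : ∀ i j, y i = y j := by
  obtain ⟨tstar, ht, -, -⟩ := Ninf_attained (fun i => (hd i).le) i0 (y := y)
  rw [hy] at ht
  have hz : ∀ i ∈ univ, d i * |y i - tstar| = 0 :=
    (sum_eq_zero_iff_of_nonneg (fun i _ => mul_nonneg (hd i).le (abs_nonneg _))).mp ht.symm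
  have hc : ∀ i, y i = tstar := by
    intro i
    have := hz i (mem_univ i)
    have h2 : |y i - tstar| = 0 := by
      rcases mul_eq_zero.mp this with h | h
      · exact absurd h (ne_of_gt (hd i))
      · exact h
    have := abs_eq_zero.mp h2; linarith
  intro i j; rw [hc i, hc j]


lemma Ninf_subgrad {d : Fin n → ℝ} (hd : ∀ i, 0 < d i) (i0 : Fin n) (z : Fin n → ℝ) :
    ∃ s : Fin n → ℝ, ∀ y : Fin n → ℝ,
      ∑ i, s i * (y i - z i) ≤ Ninf d y - Ninf d z := by
  classical
  have hd' : ∀ i, 0 ≤ d i := fun i => (hd i).le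
  obtain ⟨ts, hts, htsmin, k0, hk0⟩ := Ninf_attained hd' i0 (y := z)
  set P : Finset (Fin n) := univ.filter (fun i => ts < z i) with hP
  set Q : Finset (Fin n) := univ.filter (fun i => z i < ts) with hQ
  set A : ℝ := ∑ i ∈ P, d i with hA
  set B : ℝ := ∑ i ∈ Q, d i with hB
  -- total degree
  set vol : ℝ := ∑ i, d i with hvol
  have hsplitP : vol = A + ∑ i ∈ univ.filter (fun i => ¬ ts < z i), d i := by
    rw [hvol, hA, hP, sum_filter_add_sum_filter_not]
  have hsplitQ : vol = B + ∑ i ∈ univ.filter (fun i => ¬ z i < ts), d i := by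
    rw [hvol, hB, hQ, sum_filter_add_sum_filter_not]
  -- C
  set C : ℝ := ∑ i ∈ univ.filter (fun i => z i = ts), d i with hC
  have hCpos : 0 < C := by
    rw [hC]
    refine sum_pos' (fun i _ => (hd i).le) ⟨k0, ?_, hd k0⟩
    simp [hk0]
  -- step bound lemma: A ≤ vol - A  etc.
  -- claim1 : A ≤ B + C
  have hBC : B + C = ∑ i ∈ univ.filter (fun i => ¬ ts < z i), d i := by
    rw [hB, hC]
    rw [← sum_filter_add_sum_filter_not (univ.filter (fun i => ¬ ts < z i))
      (fun i => z i < ts) d]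
    congr 1
    · congr 1
      rw [hQ, filter_filter]
      apply filter_congr
      intro i _
      constructor
      · intro h; exact ⟨lt_asymm h, h⟩
      · intro h; exact h.2
    · congr 1
      rw [filter_filter]
      apply filter_congr
      intro i _
      constructor
      · intro h; constructor <;> simp [h]
      · intro h; exact le_antisymm (not_lt.mp h.1) (not_lt.mp h.2)
  have hAC : A + C = ∑ i ∈ univ.filter (fun i => ¬ z i < ts), d i := by
    rw [hA, hC]
    rw [← sum_filter_add_sum_filter_not (univ.filter (fun i => ¬ z i < ts))
      (fun i => ts < z i) d]
    congr 1
    · congr 1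
      rw [hP, filter_filter]
      apply filter_congr
      intro i _
      constructor
      · intro h; exact ⟨lt_asymm h, h⟩
      · intro h; exact h.2
    · congr 1
      rw [filter_filter]
      apply filter_congr
      intro i _
      constructor
      · intro h; constructor <;> simp [h]
      · intro h; exact le_antisymm (not_lt.mp h.2) (not_lt.mp h.1)
  -- A ≤ B + C
  have claim1 : A ≤ B + C := by
    rcases P.eq_empty_or_nonempty with hPe | hPne
    · have hB0 : (0:ℝ) ≤ B := sum_nonneg fun i _ => hd' i
      rw [hA, hPe]
      simp only [sum_empty]
      linarith
    · obtain ⟨imin, himinP, himin⟩ := P.exists_min_image (fun i => z i - ts) hPne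
      set h : ℝ := z imin - ts with hh
      have hhpos : 0 < h := by
        have := (mem_filter.mp himinP).2; rw [hh]; linarith
      have key : Phi d z ts ≤ Phi d z (ts + h) := htsmin _
      have expand : Phi d z (ts + h) - Phi d z ts
          = ∑ i, d i * (|z i - ts - h| - |z i - ts|) := by
        unfold Phi
        rw [← sum_sub_distrib]
        refine sum_congr rfl fun i _ => ?_
        rw [show z i - (ts + h) = z i - ts - h by ring]
        ring
      have term : ∀ i, d i * (|z i - ts - h| - |z i - ts|)
          = if ts < z i then -(d i * h) else d i * h := by
        intro i
        by_cases hi : ts < z i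
        · have hzi : h ≤ z i - ts := himin i (by simp [hP, hi])
          rw [if_pos hi, abs_of_nonneg (by linarith : (0:ℝ) ≤ z i - ts - h),
            abs_of_pos (by linarith : (0:ℝ) < z i - ts)]
          ring
        · push_neg at hi
          rw [if_neg (not_lt.mpr hi), abs_of_nonpos (by linarith), abs_of_nonpos (by linarith)]
          ring
      have sumval : ∑ i, d i * (|z i - ts - h| - |z i - ts|)
          = -(A * h) + (B + C) * h := by
        calc ∑ i, d i * (|z i - ts - h| - |z i - ts|)
            = ∑ i, (if ts < z i then -(d i * h) else d i * h) :=
              sum_congr rfl fun i _ => term i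
          _ = ∑ i ∈ P, -(d i * h) + ∑ i ∈ univ.filter (fun i => ¬ ts < z i), d i * h := by
              rw [hP, ← sum_filter_add_sum_filter_not univ (fun i => ts < z i)]
              congr 1
              · exact sum_congr rfl fun i hi => if_pos (mem_filter.mp hi).2
              · exact sum_congr rfl fun i hi => if_neg (mem_filter.mp hi).2
          _ = -(A * h) + (B + C) * h := by
              rw [hBC, hA, sum_mul, sum_mul, sum_neg_distrib]
      have h1 : 0 * h ≤ (B + C - A) * h := by nlinarith [key, expand, sumval]
      have h2 := le_of_mul_le_mul_right h1 hhpos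
      linarith
  -- B ≤ A + C
  have claim2 : B ≤ A + C := by
    rcases Q.eq_empty_or_nonempty with hQe | hQne
    · have hA0 : (0:ℝ) ≤ A := sum_nonneg fun i _ => hd' i
      rw [hB, hQe]
      simp only [sum_empty]
      linarith
    · obtain ⟨imin, himinQ, himin⟩ := Q.exists_min_image (fun i => ts - z i) hQne
      set h : ℝ := ts - z imin with hh
      have hhpos : 0 < h := by
        have := (mem_filter.mp himinQ).2; rw [hh]; linarith
      have key : Phi d z ts ≤ Phi d z (ts - h) := htsmin _
      have expand : Phi d z (ts - h) - Phi d z ts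
          = ∑ i, d i * (|z i - ts + h| - |z i - ts|) := by
        unfold Phi
        rw [← sum_sub_distrib]
        refine sum_congr rfl fun i _ => ?_
        rw [show z i - (ts - h) = z i - ts + h by ring]
        ring
      have term : ∀ i, d i * (|z i - ts + h| - |z i - ts|)
          = if z i < ts then -(d i * h) else d i * h := by
        intro i
        by_cases hi : z i < ts
        · have hzi : h ≤ ts - z i := himin i (by simp [hQ, hi])
          rw [if_pos hi, abs_of_nonpos (by linarith : z i - ts + h ≤ 0),
            abs_of_neg (by linarith : z i - ts < 0)]
          ring
        · push_neg at hi
          rw [if_neg (not_lt.mpr hi), abs_of_nonneg (by linarith), abs_of_nonneg (by linarith)]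
          ring
      have sumval : ∑ i, d i * (|z i - ts + h| - |z i - ts|)
          = -(B * h) + (A + C) * h := by
        calc ∑ i, d i * (|z i - ts + h| - |z i - ts|)
            = ∑ i, (if z i < ts then -(d i * h) else d i * h) :=
              sum_congr rfl fun i _ => term i
          _ = ∑ i ∈ Q, -(d i * h) + ∑ i ∈ univ.filter (fun i => ¬ z i < ts), d i * h := by
              rw [hQ, ← sum_filter_add_sum_filter_not univ (fun i => z i < ts)]
              congr 1
              · exact sum_congr rfl fun i hi => if_pos (mem_filter.mp hi).2
              · exact sum_congr rfl fun i hi => if_neg (mem_filter.mp hi).2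
          _ = -(B * h) + (A + C) * h := by
              rw [hAC, hB, sum_mul, sum_mul, sum_neg_distrib]
      have h1 : 0 * h ≤ (A + C - B) * h := by nlinarith [key, expand, sumval]
      have h2 := le_of_mul_le_mul_right h1 hhpos
      linarith
  -- define sigma
  set tau : ℝ := (B - A) / C with htau
  have htau_le : |tau| ≤ 1 := by
    rw [htau, abs_div, abs_of_pos hCpos, div_le_one hCpos, abs_le]
    constructor <;> nlinarith
  set sigma : Fin n → ℝ := fun i => if ts < z i then 1 else if z i < ts then -1 else tau
    with hsigma
  have hsig_le : ∀ i, |sigma i| ≤ 1 := by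
    intro i
    rw [hsigma]
    by_cases h1 : ts < z i
    · simp [h1]
    · by_cases h2 : z i < ts
      · simp [h1, h2]
      · simpa [h1, h2] using htau_le
  have hsig_sum : ∑ i, d i * sigma i = 0 := by
    have : ∑ i, d i * sigma i
        = ∑ i ∈ P, d i * 1 + (∑ i ∈ Q, d i * (-1)
          + ∑ i ∈ univ.filter (fun i => z i = ts), d i * tau) := by
      rw [hP, ← sum_filter_add_sum_filter_not univ (fun i => ts < z i) (fun i => d i * sigma i)]
      congr 1
      · refine sum_congr rfl fun i hi => ?_
        rw [hsigma]; simp [(mem_filter.mp hi).2]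
      · rw [← sum_filter_add_sum_filter_not (univ.filter (fun i => ¬ ts < z i))
          (fun i => z i < ts) (fun i => d i * sigma i)]
        congr 1
        · rw [filter_filter]
          rw [show (univ.filter fun i => ¬ts < z i ∧ z i < ts) = Q by
            rw [hQ]; apply filter_congr; intro i _;
            exact ⟨fun h => h.2, fun h => ⟨lt_asymm h, h⟩⟩]
          refine sum_congr rfl fun i hi => ?_
          have := (mem_filter.mp hi).2
          rw [hsigma]; simp [this, lt_asymm this]
        · rw [filter_filter]
          rw [show (univ.filter fun i => ¬ts < z i ∧ ¬z i < ts)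
              = univ.filter (fun i => z i = ts) by
            apply filter_congr; intro i _;
            constructor
            · intro h; exact le_antisymm (not_lt.mp h.1) (not_lt.mp h.2)
            · intro h; constructor <;> simp [h]]
          refine sum_congr rfl fun i hi => ?_
          have hi2 := (mem_filter.mp hi).2
          rw [hsigma]
          simp [hi2]
    have e1 : ∑ i ∈ P, d i * 1 = A := by rw [hA]; simp
    have e2 : ∑ i ∈ Q, d i * (-1) = -B := by
      rw [hB]
      simp [sum_neg_distrib]
    have e3 : ∑ i ∈ univ.filter (fun i => z i = ts), d i * tau = C * tau := by
      rw [hC, ← sum_mul]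
    rw [this, e1, e2, e3, htau]
    field_simp
    ring
  have hsig_pair : ∑ i, d i * sigma i * (z i - ts) = Phi d z ts := by
    unfold Phi
    refine sum_congr rfl fun i _ => ?_
    rcases lt_trichotomy (z i) ts with h | h | h
    · have hs : sigma i = -1 := by simp [hsigma, h, lt_asymm h]
      rw [hs, abs_of_neg (by linarith : z i - ts < 0)]
      ring
    · have hs : sigma i = tau := by simp [hsigma, h]
      rw [hs, h]
      simp
    · have hs : sigma i = 1 := by simp [hsigma, h]
      rw [hs, abs_of_pos (by linarith : (0:ℝ) < z i - ts)]
      ring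
  refine ⟨fun i => d i * sigma i, fun y => ?_⟩
  obtain ⟨t', ht', -, -⟩ := Ninf_attained hd' i0 (y := y)
  have step1 : ∑ i, d i * sigma i * (y i - z i)
      = ∑ i, d i * sigma i * (y i - t') - ∑ i, d i * sigma i * (z i - ts)
        - (ts - t') * ∑ i, d i * sigma i := by
    rw [← sum_sub_distrib, mul_sum, ← sum_sub_distrib]
    refine sum_congr rfl fun i _ => ?_
    ring
  have step2 : ∑ i, d i * sigma i * (y i - t') ≤ Phi d y t' := by
    unfold Phi
    refine sum_le_sum fun i _ => ?_
    calc d i * sigma i * (y i - t') ≤ |d i * sigma i * (y i - t')| := le_abs_self _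
      _ = d i * (|sigma i| * |y i - t'|) := by
          rw [abs_mul, abs_mul, abs_of_nonneg (hd' i)]; ring
      _ ≤ d i * (1 * |y i - t'|) := by
          have := hsig_le i
          have := abs_nonneg (y i - t')
          have := hd' i
          nlinarith [mul_le_mul_of_nonneg_right (hsig_le i) (abs_nonneg (y i - t'))]
      _ = d i * |y i - t'| := by ring
  rw [step1, hsig_sum, hsig_pair]
  rw [ht', hts]
  linarith [step2]


variable {G : SimpleGraph (Fin n)} [DecidableRel G.Adj] {w : Fin n → Fin n → ℝ}

lemma wdeg_nonneg (hpos : ∀ i j, G.Adj i j → 0 < w i j) (i : Fin n) : 0 ≤ wdeg G w i := by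
  refine sum_nonneg fun j _ => ?_
  by_cases h : G.Adj i j
  · simp only [if_pos h]; exact (hpos i j h).le
  · simp [h]

lemma wdeg_pos (hpos : ∀ i j, G.Adj i j → 0 < w i j) {k m : Fin n} (h : G.Adj k m) :
    0 < wdeg G w k := by
  refine sum_pos' (fun j _ => ?_) ⟨m, mem_univ m, ?_⟩
  · by_cases hj : G.Adj k j
    · simp only [if_pos hj]; exact (hpos k j hj).le
    · simp [hj]
  · simp only [if_pos h]; exact hpos k m h

lemma sum_wdeg_mul (v : Fin n → ℝ) :
    ∑ i, wdeg G w i * v i = ∑ i, ∑ j, (if G.Adj i j then w i j else 0) * v i := by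
  refine sum_congr rfl fun i _ => ?_
  rw [wdeg, sum_mul]

lemma sum_wdeg_mul' (hsymm : ∀ i j, w i j = w j i) (v : Fin n → ℝ) :
    ∑ i, ∑ j, (if G.Adj i j then w i j else 0) * v j = ∑ j, wdeg G w j * v j := by
  rw [Finset.sum_comm]
  refine sum_congr rfl fun j _ => ?_
  rw [wdeg, sum_mul]
  refine sum_congr rfl fun i _ => ?_
  by_cases h : G.Adj i j
  · rw [if_pos h, if_pos (G.adj_symm h), hsymm i j]
  · rw [if_neg h, if_neg (fun hc => h (G.adj_symm hc))]

lemma Iplus_subgrad (hsymm : ∀ i j, w i j = w j i) (hpos : ∀ i j, G.Adj i j → 0 < w i j)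
    (z : Fin n → ℝ) :
    (fun i => ∑ j, if G.Adj i j then w i j * sgn (z i + z j) else 0)
      ∈ subdiff (Iplus G w) z := by
  intro y
  have hq : ∀ i j, (if G.Adj i j then w i j * sgn (z i + z j) else 0)
      = (if G.Adj j i then w j i * sgn (z j + z i) else 0) := by
    intro i j
    by_cases h : G.Adj i j
    · rw [if_pos h, if_pos (G.adj_symm h), hsymm i j, add_comm (z i)]
    · rw [if_neg h, if_neg (fun hc => h (G.adj_symm hc))]
  set q : Fin n → Fin n → ℝ := fun i j => if G.Adj i j then w i j * sgn (z i + z j) else 0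
    with hqdef
  have e1 : ∑ i, (∑ j, q i j) * (y i - z i) = ∑ i, ∑ j, q i j * (y i - z i) :=
    sum_congr rfl fun i _ => sum_mul _ _ _
  have e2 : ∑ i, ∑ j, q i j * (y i - z i) = ∑ i, ∑ j, q i j * (y j - z j) := by
    rw [Finset.sum_comm]
    refine sum_congr rfl fun j _ => sum_congr rfl fun i _ => ?_
    exact congrArg (fun r => r * (y i - z i)) (hq i j)
  have e3 : ∑ i, (∑ j, q i j) * (y i - z i)
      = (∑ i, ∑ j, q i j * ((y i + y j) - (z i + z j))) / 2 := by
    have : ∑ i, ∑ j, q i j * ((y i + y j) - (z i + z j))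
        = ∑ i, ∑ j, q i j * (y i - z i) + ∑ i, ∑ j, q i j * (y j - z j) := by
      rw [← sum_add_distrib]
      refine sum_congr rfl fun i _ => ?_
      rw [← sum_add_distrib]
      refine sum_congr rfl fun j _ => by ring
    rw [this, ← e2, e1]
    ring
  have e4 : ∑ i, ∑ j, q i j * ((y i + y j) - (z i + z j))
      ≤ ∑ i, ∑ j, ((if G.Adj i j then w i j * |y i + y j| else 0)
          - (if G.Adj i j then w i j * |z i + z j| else 0)) := by
    refine sum_le_sum fun i _ => sum_le_sum fun j _ => ?_
    by_cases h : G.Adj i j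
    · simp only [hqdef, if_pos h]
      have h1 := abs_sub_abs_ge_sgn (y i + y j) (z i + z j)
      have h2 := (hpos i j h).le
      calc w i j * sgn (z i + z j) * ((y i + y j) - (z i + z j))
          = w i j * (sgn (z i + z j) * ((y i + y j) - (z i + z j))) := by ring
        _ ≤ w i j * (|y i + y j| - |z i + z j|) := by
            exact mul_le_mul_of_nonneg_left h1 h2
        _ = w i j * |y i + y j| - w i j * |z i + z j| := by ring
    · simp [hqdef, h]
  calc ∑ i, (∑ j, q i j) * (y i - z i)
      = (∑ i, ∑ j, q i j * ((y i + y j) - (z i + z j))) / 2 := e3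
    _ ≤ (∑ i, ∑ j, ((if G.Adj i j then w i j * |y i + y j| else 0)
          - (if G.Adj i j then w i j * |z i + z j| else 0))) / 2 := by linarith [e4]
    _ = Iplus G w y - Iplus G w z := by
        rw [Iplus, Iplus]
        rw [show (∑ i, ∑ j, ((if G.Adj i j then w i j * |y i + y j| else 0)
          - (if G.Adj i j then w i j * |z i + z j| else 0)))
          = ∑ i, ∑ j, (if G.Adj i j then w i j * |y i + y j| else 0)
            - ∑ i, ∑ j, (if G.Adj i j then w i j * |z i + z j| else 0) by
            rw [← sum_sub_distrib]
            exact sum_congr rfl fun i _ => by rw [← sum_sub_distrib]]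
        ring

lemma abs_le_norm (y : Fin n → ℝ) (i : Fin n) : |y i| ≤ ‖y‖ := by
  have := norm_le_pi_norm y i
  rwa [Real.norm_eq_abs] at this

lemma norm_le_of {y : Fin n → ℝ} {M : ℝ} (hM : 0 ≤ M) (h : ∀ i, |y i| ≤ M) : ‖y‖ ≤ M := by
  rw [pi_norm_le_iff_of_nonneg hM]
  intro i
  rw [Real.norm_eq_abs]
  exact h i

lemma norm_smul_fn {y : Fin n → ℝ} {c : ℝ} (hc : 0 ≤ c) :
    ‖(fun i => c * y i)‖ = c * ‖y‖ := by
  have : (fun i => c * y i) = c • y := by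
    funext i; simp
  rw [this, norm_smul, Real.norm_eq_abs, abs_of_nonneg hc]

lemma norm_neg_fn (y : Fin n → ℝ) : ‖(fun i => -y i)‖ = ‖y‖ := by
  have : (fun i => -y i) = -y := by funext i; simp
  rw [this, norm_neg]

lemma Iplus_smul {y : Fin n → ℝ} {c : ℝ} (hc : 0 ≤ c) :
    Iplus G w (fun i => c * y i) = c * Iplus G w y := by
  rw [Iplus, Iplus, mul_div_assoc']
  congr 1
  rw [mul_sum]
  refine sum_congr rfl fun i _ => ?_
  rw [mul_sum]
  refine sum_congr rfl fun j _ => ?_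
  by_cases h : G.Adj i j
  · rw [if_pos h, if_pos h, show c * y i + c * y j = c * (y i + y j) by ring,
      abs_mul, abs_of_nonneg hc]
    ring
  · simp [h]

lemma Iplus_neg (y : Fin n → ℝ) : Iplus G w (fun i => -y i) = Iplus G w y := by
  rw [Iplus, Iplus]
  congr 1
  refine sum_congr rfl fun i _ => sum_congr rfl fun j _ => ?_
  by_cases h : G.Adj i j
  · rw [if_pos h, if_pos h, show -y i + -y j = -(y i + y j) by ring, abs_neg]
  · simp [h]

lemma Iplus_zero : Iplus G w (0 : Fin n → ℝ) = 0 := by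
  rw [Iplus]
  have : ∀ i ∈ univ, ∑ j, (if G.Adj i j then w i j * |(0:Fin n → ℝ) i + (0:Fin n → ℝ) j| else 0) = 0 := by
    intro i _
    refine sum_eq_zero fun j _ => ?_
    by_cases h : G.Adj i j
    · simp [h]
    · simp [h]
  rw [sum_congr rfl this]
  simp

lemma walk_const {z : Fin n → ℝ} (h : ∀ i j, G.Adj i j → z i = z j) {i j : Fin n}
    (p : G.Walk i j) : z i = z j := by
  induction p with
  | nil => rfl
  | cons h' _ ih => exact (h _ _ h').trans ih

lemma exists_neighbor (hconn : G.Connected) {v k : Fin n} (hvk : v ≠ k) :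
    ∃ m, G.Adj k m := by
  obtain ⟨p⟩ := hconn.preconnected k v
  cases p with
  | nil => exact absurd rfl hvk.symm
  | cons h _ => exact ⟨_, h⟩

lemma subdiff_pairing {f : (Fin n → ℝ) → ℝ} {x s : Fin n → ℝ} (hs : s ∈ subdiff f x)
    (h2 : f (fun i => 2 * x i) = 2 * f x) (h0 : f 0 = 0) :
    ∑ i, s i * x i = f x := by
  have ha := hs (fun i => 2 * x i)
  have hb := hs 0
  rw [h2] at ha
  rw [h0] at hb
  have e1 : ∑ i, s i * ((fun i => 2 * x i) i - x i) = ∑ i, s i * x i :=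
    sum_congr rfl fun i _ => by ring
  have e2 : ∑ i, s i * ((0:Fin n → ℝ) i - x i) = -∑ i, s i * x i := by
    rw [← sum_neg_distrib]
    exact sum_congr rfl fun i _ => by rw [Pi.zero_apply]; ring
  rw [e1] at ha
  rw [e2] at hb
  linarith


lemma Ninf_lip {d : Fin n → ℝ} (hd : ∀ i, 0 ≤ d i) (i0 : Fin n) (y y' : Fin n → ℝ) :
    Ninf d y ≤ Ninf d y' + (∑ i, d i) * ‖y - y'‖ := by
  obtain ⟨t', ht', -, -⟩ := Ninf_attained hd i0 (y := y')
  have h1 : Phi d y t' ≤ Phi d y' t' + ∑ i, d i * ‖y - y'‖ := by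
    rw [Phi, Phi, ← sum_add_distrib]
    refine sum_le_sum fun i _ => ?_
    have h2 : |y i - t'| ≤ |y' i - t'| + |y i - y' i| := by
      have := abs_add_le (y' i - t') (y i - y' i)
      calc |y i - t'| = |(y' i - t') + (y i - y' i)| := by ring_nf
        _ ≤ |y' i - t'| + |y i - y' i| := abs_add_le _ _
    have h3 : |y i - y' i| ≤ ‖y - y'‖ := by
      have := abs_le_norm (y - y') i
      simpa using this
    nlinarith [hd i, abs_nonneg (y i - y' i)]
  calc Ninf d y ≤ Phi d y t' := Ninf_le hd t'
    _ ≤ Phi d y' t' + ∑ i, d i * ‖y - y'‖ := h1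
    _ = Ninf d y' + (∑ i, d i) * ‖y - y'‖ := by rw [← ht', sum_mul]

lemma Ninf_cont {d : Fin n → ℝ} (hd : ∀ i, 0 ≤ d i) (i0 : Fin n) :
    Continuous (Ninf d) := by
  have hK : 0 ≤ ∑ i, d i := sum_nonneg fun i _ => hd i
  refine (LipschitzWith.of_dist_le_mul (K := ⟨∑ i, d i, hK⟩) ?_).continuous
  intro y y'
  rw [Real.dist_eq, dist_eq_norm]
  rw [abs_le]
  constructor
  · have := Ninf_lip hd i0 y' y
    rw [norm_sub_rev] at this
    push_cast
    change -((∑ i, d i) * ‖y - y'‖) ≤ _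
    linarith
  · have := Ninf_lip hd i0 y y'
    push_cast
    change _ ≤ (∑ i, d i) * ‖y - y'‖
    linarith

lemma Iplus_cont : Continuous (Iplus G w) := by
  refine Continuous.div_const ?_ 2
  refine continuous_finset_sum _ fun i _ => continuous_finset_sum _ fun j _ => ?_
  by_cases h : G.Adj i j
  · simp only [if_pos h]
    exact continuous_const.mul ((continuous_apply i).add (continuous_apply j)).abs
  · simp only [if_neg h]
    exact continuous_const

lemma K_compact :
    IsCompact {y : Fin n → ℝ | ‖y‖ = 1 ∧ (∃ i, y i ≤ 0) ∧ (∃ i, 0 ≤ y i)} := by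
  have h1 : IsClosed {y : Fin n → ℝ | ‖y‖ = 1} := isClosed_eq continuous_norm continuous_const
  have h2 : IsClosed {y : Fin n → ℝ | ∃ i, y i ≤ 0} := by
    have he : {y : Fin n → ℝ | ∃ i, y i ≤ 0} = ⋃ i, {y : Fin n → ℝ | y i ≤ 0} := by
      ext y; simp
    rw [he]
    exact isClosed_iUnion_of_finite fun i => isClosed_le (continuous_apply i) continuous_const
  have h3 : IsClosed {y : Fin n → ℝ | ∃ i, 0 ≤ y i} := by
    have he : {y : Fin n → ℝ | ∃ i, 0 ≤ y i} = ⋃ i, {y : Fin n → ℝ | 0 ≤ y i} := by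
      ext y; simp
    rw [he]
    exact isClosed_iUnion_of_finite fun i => isClosed_le continuous_const (continuous_apply i)
  refine (isCompact_closedBall (0 : Fin n → ℝ) 1).of_isClosed_subset ?_ ?_
  · have hset : {y : Fin n → ℝ | ‖y‖ = 1 ∧ (∃ i, y i ≤ 0) ∧ (∃ i, 0 ≤ y i)}
        = {y : Fin n → ℝ | ‖y‖ = 1} ∩ ({y : Fin n → ℝ | ∃ i, y i ≤ 0} ∩ {y : Fin n → ℝ | ∃ i, 0 ≤ y i}) := rfl
    rw [hset]
    exact h1.inter (h2.inter h3)
  · intro y hy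
    simp only [Metric.mem_closedBall, dist_zero_right]
    exact le_of_eq hy.1

lemma volV_eq_double :
    volV G w = ∑ i, ∑ j, (if G.Adj i j then w i j else 0) := by
  rfl

lemma Iplus_signdef (hsymm : ∀ i j, w i j = w j i) {y : Fin n → ℝ} (hy : ∀ i, 0 ≤ y i) :
    Iplus G w y = ∑ i, wdeg G w i * y i := by
  rw [Iplus]
  have key : ∑ i, ∑ j, (if G.Adj i j then w i j * |y i + y j| else 0)
      = ∑ i, ∑ j, ((if G.Adj i j then w i j else 0) * y i
        + (if G.Adj i j then w i j else 0) * y j) := by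
    refine sum_congr rfl fun i _ => sum_congr rfl fun j _ => ?_
    by_cases h : G.Adj i j
    · rw [if_pos h, if_pos h, abs_of_nonneg (add_nonneg (hy i) (hy j))]
      ring
    · simp [h]
  rw [key]
  have split : ∑ i, ∑ j, ((if G.Adj i j then w i j else 0) * y i
        + (if G.Adj i j then w i j else 0) * y j)
      = (∑ i, ∑ j, (if G.Adj i j then w i j else 0) * y i)
        + ∑ i, ∑ j, (if G.Adj i j then w i j else 0) * y j := by
    rw [← sum_add_distrib]
    exact sum_congr rfl fun i _ => by rw [← sum_add_distrib]
  rw [split, ← sum_wdeg_mul, sum_wdeg_mul' hsymm]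
  ring

lemma signdef_ineq (hsymm : ∀ i j, w i j = w j i) (hd : ∀ i, 0 ≤ wdeg G w i)
    {y : Fin n → ℝ} (hy : ∀ i, 0 ≤ y i) :
    Ninf (wdeg G w) y ≤ volV G w * ‖y‖ - Iplus G w y := by
  have h3 : volV G w * ‖y‖ - Iplus G w y = Phi (wdeg G w) y ‖y‖ := by
    rw [Iplus_signdef hsymm hy, Phi, volV, sum_mul, ← sum_sub_distrib]
    refine sum_congr rfl fun i _ => ?_
    have h4 : y i ≤ ‖y‖ := (le_abs_self _).trans (abs_le_norm y i)
    rw [abs_of_nonpos (by linarith)]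
    ring
  rw [h3]
  exact Ninf_le hd _

lemma Fn_pos (hsymm : ∀ i j, w i j = w j i) (hpos : ∀ i j, G.Adj i j → 0 < w i j)
    (hconn : G.Connected) {z : Fin n → ℝ} (hz : ‖z‖ = 1)
    (hnc : ¬ ∀ i j, z i = z j) :
    0 < volV G w * ‖z‖ - Iplus G w z := by
  set T := ∑ i, ∑ j, (if G.Adj i j then w i j * (2 * ‖z‖ - |z i + z j|) else 0) with hT
  have hT1 : T = 2 * (volV G w * ‖z‖ - Iplus G w z) := by
    have e : T = (∑ i, ∑ j, (if G.Adj i j then w i j else 0) * (2 * ‖z‖))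
        - ∑ i, ∑ j, (if G.Adj i j then w i j * |z i + z j| else 0) := by
      rw [hT, ← sum_sub_distrib]
      refine sum_congr rfl fun i _ => ?_
      rw [← sum_sub_distrib]
      refine sum_congr rfl fun j _ => ?_
      by_cases h : G.Adj i j
      · rw [if_pos h, if_pos h, if_pos h]; ring
      · simp [h]
    have e2 : (∑ i, ∑ j, (if G.Adj i j then w i j else 0) * (2 * ‖z‖))
        = (∑ i, ∑ j, (if G.Adj i j then w i j else 0)) * (2 * ‖z‖) := by
      rw [sum_mul]
      exact sum_congr rfl fun i _ => (sum_mul _ _ _).symm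
    rw [e, e2, ← volV_eq_double, Iplus]
    ring
  have htermnn : ∀ i j, 0 ≤ (if G.Adj i j then w i j * (2 * ‖z‖ - |z i + z j|) else 0) := by
    intro i j
    by_cases h : G.Adj i j
    · rw [if_pos h]
      refine mul_nonneg (hpos i j h).le ?_
      have h1 := abs_le_norm z i
      have h2 := abs_le_norm z j
      have h3 := abs_add_le (z i) (z j)
      linarith
    · simp [h]
  have hTnn : 0 ≤ T :=
    sum_nonneg fun i _ => sum_nonneg fun j _ => htermnn i j
  have hFnn : 0 ≤ volV G w * ‖z‖ - Iplus G w z := by linarith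
  rcases eq_or_lt_of_le hFnn with heq0 | h
  · exfalso
    have hT0 : T = 0 := by rw [hT1, ← heq0]; ring
    have hT0' : (∑ i, ∑ j, (if G.Adj i j then w i j * (2 * ‖z‖ - |z i + z j|) else 0)) = 0 := by
      rw [← hT]; exact hT0
    have hallz : ∀ i ∈ univ, ∑ j, (if G.Adj i j then w i j * (2 * ‖z‖ - |z i + z j|) else 0) = 0 := by
      intro i _
      exact (sum_eq_zero_iff_of_nonneg (fun i _ =>
        sum_nonneg fun j _ => htermnn i j)).mp hT0' i (mem_univ i)
    have hedge : ∀ i j, G.Adj i j → z i = z j := by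
      intro i j hij
      have h1 : (if G.Adj i j then w i j * (2 * ‖z‖ - |z i + z j|) else 0) = 0 :=
        (sum_eq_zero_iff_of_nonneg (fun j _ => htermnn i j)).mp (hallz i (mem_univ i)) j (mem_univ j)
      rw [if_pos hij] at h1
      have h2 : 2 * ‖z‖ - |z i + z j| = 0 := by
        rcases mul_eq_zero.mp h1 with h | h
        · exact absurd h (ne_of_gt (hpos i j hij))
        · exact h
      rw [hz] at h2
      have hzi := abs_le_norm z i
      have hzj := abs_le_norm z j
      rw [hz] at hzi hzj
      have habs : |z i + z j| = 2 := by linarith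
      rcases abs_eq (by norm_num : (0:ℝ) ≤ 2) |>.mp habs with h | h
      · have : z i = 1 ∧ z j = 1 := by
          constructor <;> cases' abs_le.mp hzi with l r <;> cases' abs_le.mp hzj with l2 r2 <;> linarith
        rw [this.1, this.2]
      · have : z i = -1 ∧ z j = -1 := by
          constructor <;> cases' abs_le.mp hzi with l r <;> cases' abs_le.mp hzj with l2 r2 <;> linarith
        rw [this.1, this.2]
    exact hnc fun i j => walk_const hedge (hconn.preconnected i j).some
  · exact h



lemma Ninf_zero {d : Fin n → ℝ} (hd : ∀ i, 0 ≤ d i) : Ninf d (0 : Fin n → ℝ) = 0 := by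
  refine le_antisymm ?_ (Ninf_nonneg hd)
  have h := Ninf_le hd (y := (0 : Fin n → ℝ)) 0
  have h2 : Phi d (0 : Fin n → ℝ) 0 = 0 := by
    rw [Phi]
    refine sum_eq_zero fun i _ => ?_
    simp
  rw [h2] at h
  exact h

lemma Iplus_testvec (hsymm : ∀ i j, w i j = w j i) (k1 : Fin n) :
    Iplus G w (fun i => if i = k1 then (1:ℝ) else -1) = volV G w - 2 * wdeg G w k1 := by
  classical
  set y1 : Fin n → ℝ := fun i => if i = k1 then (1:ℝ) else -1 with hy1
  have key : ∀ i j, (if G.Adj i j then w i j * |y1 i + y1 j| else 0)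
      = 2 * (if G.Adj i j then w i j else 0)
        - 2 * (if i = k1 then (if G.Adj i j then w i j else 0) else 0)
        - 2 * (if j = k1 then (if G.Adj i j then w i j else 0) else 0) := by
    intro i j
    by_cases h : G.Adj i j
    · by_cases hi : i = k1
      · by_cases hj : j = k1
        · exact absurd (hi.trans hj.symm) (G.ne_of_adj h)
        · simp only [if_pos h, if_pos hi, if_neg hj]
          have : y1 i + y1 j = 0 := by rw [hy1]; simp [hi, hj]
          rw [this, abs_zero]
          ring
      · by_cases hj : j = k1
        · simp only [if_pos h, if_neg hi, if_pos hj]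
          have : y1 i + y1 j = 0 := by rw [hy1]; simp [hi, hj]
          rw [this, abs_zero]
          ring
        · simp only [if_pos h, if_neg hi, if_neg hj]
          have : y1 i + y1 j = -2 := by rw [hy1]; simp [hi, hj]; ring
          rw [this]
          rw [show |(-2:ℝ)| = 2 by norm_num]
          ring
    · simp [h]
  rw [Iplus]
  rw [sum_congr rfl fun i _ => sum_congr rfl fun j _ => key i j]
  have e1 : ∑ i, ∑ j, (2 * (if G.Adj i j then w i j else 0)
        - 2 * (if i = k1 then (if G.Adj i j then w i j else 0) else 0)
        - 2 * (if j = k1 then (if G.Adj i j then w i j else 0) else 0))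
      = 2 * (∑ i, ∑ j, (if G.Adj i j then w i j else 0))
        - 2 * (∑ i, ∑ j, (if i = k1 then (if G.Adj i j then w i j else 0) else 0))
        - 2 * (∑ i, ∑ j, (if j = k1 then (if G.Adj i j then w i j else 0) else 0)) := by
    rw [mul_sum, mul_sum, mul_sum, ← sum_sub_distrib, ← sum_sub_distrib]
    refine sum_congr rfl fun i _ => ?_
    rw [mul_sum, mul_sum, mul_sum, ← sum_sub_distrib, ← sum_sub_distrib]
  have e2 : ∑ i, ∑ j, (if i = k1 then (if G.Adj i j then w i j else 0) else 0)
      = wdeg G w k1 := by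
    have : ∀ i, ∑ j, (if i = k1 then (if G.Adj i j then w i j else 0) else 0)
        = if i = k1 then wdeg G w i else 0 := by
      intro i
      by_cases hi : i = k1
      · simp only [if_pos hi]; rfl
      · simp [hi]
    rw [sum_congr rfl fun i _ => this i]
    rw [sum_ite_eq' univ k1 (fun i => wdeg G w i)]
    simp
  have e3 : ∑ i, ∑ j, (if j = k1 then (if G.Adj i j then w i j else 0) else 0)
      = wdeg G w k1 := by
    have h1 : ∀ i, ∑ j, (if j = k1 then (if G.Adj i j then w i j else 0) else 0)
        = (if G.Adj i k1 then w i k1 else 0) := by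
      intro i
      rw [sum_ite_eq' univ k1 (fun j => if G.Adj i j then w i j else 0)]
      simp
    rw [sum_congr rfl fun i _ => h1 i]
    rw [wdeg]
    refine sum_congr rfl fun i _ => ?_
    by_cases h : G.Adj i k1
    · rw [if_pos h, if_pos (G.adj_symm h), hsymm i k1]
    · rw [if_neg h, if_neg (fun hc => h (G.adj_symm hc))]
  rw [e1, e2, e3, ← volV_eq_double]
  ring

lemma Ninf_testvec {k1 m1 : Fin n} (hd : ∀ i, 0 ≤ wdeg G w i)
    (hk1min : ∀ i, wdeg G w k1 ≤ wdeg G w i) (hne : m1 ≠ k1) :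
    2 * wdeg G w k1 ≤ Ninf (wdeg G w) (fun i => if i = k1 then (1:ℝ) else -1) := by
  classical
  set d := wdeg G w with hddef
  set y1 : Fin n → ℝ := fun i => if i = k1 then (1:ℝ) else -1 with hy1
  refine le_ciInf fun t => ?_
  have hpair : d k1 * |y1 k1 - t| + d m1 * |y1 m1 - t| ≤ Phi d y1 t := by
    rw [Phi]
    rw [show d k1 * |y1 k1 - t| + d m1 * |y1 m1 - t|
        = ∑ i ∈ ({k1, m1} : Finset (Fin n)), d i * |y1 i - t| by
      rw [sum_pair (Ne.symm hne)]]
    refine sum_le_sum_of_subset_of_nonneg (subset_univ _) fun i _ _ => ?_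
    exact mul_nonneg (hd i) (abs_nonneg _)
  have hk1v : y1 k1 = 1 := by rw [hy1]; simp
  have hm1v : y1 m1 = -1 := by rw [hy1]; simp [hne]
  have h1 : d k1 * |(-1:ℝ) - t| ≤ d m1 * |(-1:ℝ) - t| :=
    mul_le_mul_of_nonneg_right (hk1min m1) (abs_nonneg _)
  have h2 : (2:ℝ) ≤ |(1:ℝ) - t| + |(-1:ℝ) - t| := by
    have := abs_sub (1 - t) (-1 - t)
    have h3 : |(1 - t) - (-1 - t)| = 2 := by norm_num
    linarith
  have h4 : d k1 * 2 ≤ d k1 * (|(1:ℝ) - t| + |(-1:ℝ) - t|) :=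
    mul_le_mul_of_nonneg_left h2 (hd k1)
  rw [hk1v, hm1v] at hpair
  nlinarith [hpair, h1, h4]


lemma global_ineq (hsymm : ∀ i j, w i j = w j i) (hpos : ∀ i j, G.Adj i j → 0 < w i j)
    (hconn : G.Connected) (hd : ∀ k, 0 < wdeg G w k)
    (a b : Fin n) (hab : G.Adj a b) (mu : ℝ) (hmu : 0 < mu)
    (hmin : ∀ lam : ℝ, ∀ y : Fin n → ℝ, IsEigenStar G w lam y → 0 < lam → mu ≤ lam) :
    ∀ y : Fin n → ℝ, mu * Nfun G w y ≤ volV G w * ‖y‖ - Iplus G w y := by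
  classical
  set d := wdeg G w with hddef
  have hd' : ∀ i, 0 ≤ d i := fun i => (hd i).le
  have hvol : 0 < volV G w := sum_pos (fun i _ => hd i) ⟨a, mem_univ a⟩
  set K := {y : Fin n → ℝ | ‖y‖ = 1 ∧ (∃ i, y i ≤ 0) ∧ (∃ i, 0 ≤ y i)} with hKdef
  obtain ⟨k1, -, hk1min⟩ := Finset.exists_min_image univ d ⟨a, mem_univ a⟩
  set y1 : Fin n → ℝ := fun i => if i = k1 then (1:ℝ) else -1 with hy1def
  have hm1 : ∃ m, m ≠ k1 := by
    rcases eq_or_ne a k1 with rfl | h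
    · exact ⟨b, fun hc => G.ne_of_adj hab (hc.symm)⟩
    · exact ⟨a, h⟩
  obtain ⟨m1, hm1⟩ := hm1
  have hy1norm : ‖y1‖ = 1 := by
    refine le_antisymm (norm_le_of zero_le_one fun i => ?_) ?_
    · rw [hy1def]
      by_cases h : i = k1 <;> simp [h]
    · have h := abs_le_norm y1 k1
      have : |y1 k1| = 1 := by rw [hy1def]; simp
      linarith
  have hy1K : y1 ∈ K := by
    refine ⟨hy1norm, ⟨m1, ?_⟩, ⟨k1, ?_⟩⟩
    · rw [hy1def]; simp [hm1]
    · rw [hy1def]; simp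
  have hNposK : ∀ y ∈ K, 0 < Ninf d y := by
    intro y hy
    rcases eq_or_lt_of_le (Ninf_nonneg (y := y) hd') with h0 | h
    · exfalso
      have hcst := Ninf_pos_ne_const hd a h0.symm
      obtain ⟨hn, ⟨i1, hi1⟩, ⟨i2, hi2⟩⟩ := hy
      have hy0 : ∀ i, y i = 0 := fun i =>
        le_antisymm ((hcst i i1) ▸ hi1) ((hcst i i2) ▸ hi2)
      have hyz : y = 0 := funext fun i => hy0 i
      rw [hyz, norm_zero] at hn
      norm_num at hn
    · exact h
  have hFcont : Continuous (fun y : Fin n → ℝ => volV G w * ‖y‖ - Iplus G w y) :=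
    (continuous_const.mul continuous_norm).sub Iplus_cont
  have hRcont : ContinuousOn (fun y => (volV G w * ‖y‖ - Iplus G w y) / Ninf d y) K :=
    (hFcont.continuousOn).div ((Ninf_cont hd' a).continuousOn)
      (fun y hy => ne_of_gt (hNposK y hy))
  obtain ⟨z, hzK, hzmin⟩ := K_compact.exists_isMinOn ⟨y1, hy1K⟩ hRcont
  set lam := (volV G w * ‖z‖ - Iplus G w z) / Ninf d z with hlam
  have hNz := hNposK z hzK
  -- lam ≤ 1
  have hFy1 : volV G w * ‖y1‖ - Iplus G w y1 = 2 * d k1 := by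
    rw [hy1norm, Iplus_testvec hsymm k1]
    ring
  have hNy1 : 2 * d k1 ≤ Ninf d y1 := Ninf_testvec hd' (fun i => hk1min i (mem_univ i)) hm1
  have hNy1pos : 0 < Ninf d y1 := hNposK y1 hy1K
  have hlam1 : lam ≤ 1 := by
    have h2 : lam ≤ (volV G w * ‖y1‖ - Iplus G w y1) / Ninf d y1 :=
      isMinOn_iff.mp hzmin y1 hy1K
    rw [hFy1] at h2
    have h3 : (2 * d k1) / Ninf d y1 ≤ 1 := by
      rw [div_le_one hNy1pos]
      linarith
    linarith
  -- lam > 0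
  have hzne : ¬ ∀ i j, z i = z j := by
    intro hcst
    obtain ⟨hn, ⟨i1, hi1⟩, ⟨i2, hi2⟩⟩ := hzK
    have hz0 : ∀ i, z i = 0 := fun i =>
      le_antisymm ((hcst i i1) ▸ hi1) ((hcst i i2) ▸ hi2)
    have hzz : z = 0 := funext fun i => hz0 i
    rw [hzz, norm_zero] at hn
    norm_num at hn
  have hFz : 0 < volV G w * ‖z‖ - Iplus G w z := Fn_pos hsymm hpos hconn hzK.1 hzne
  have hlampos : 0 < lam := div_pos hFz hNz
  have heqz : volV G w * ‖z‖ - Iplus G w z = lam * Ninf d z := by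
    rw [hlam]
    field_simp
  -- global inequality with lam
  have hglob0 : ∀ y, lam * Ninf d y ≤ volV G w * ‖y‖ - Iplus G w y := by
    intro y
    by_cases hcase1 : ∀ i, 0 ≤ y i
    · have h1 := signdef_ineq hsymm hd' hcase1
      have h2 : lam * Ninf d y ≤ 1 * Ninf d y :=
        mul_le_mul_of_nonneg_right hlam1 (Ninf_nonneg hd')
      rw [← hddef] at h1
      linarith
    · push_neg at hcase1
      obtain ⟨i1, hi1⟩ := hcase1
      by_cases hcase2 : ∀ i, y i ≤ 0
      · have h1 := signdef_ineq hsymm hd' (y := fun i => -y i)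
          (fun i => by simpa using neg_nonneg.mpr (hcase2 i))
        rw [Iplus_neg, norm_neg_fn, ← hddef, Ninf_neg hd' a] at h1
        have h2 : lam * Ninf d y ≤ 1 * Ninf d y :=
          mul_le_mul_of_nonneg_right hlam1 (Ninf_nonneg hd')
        linarith
      · push_neg at hcase2
        obtain ⟨i2, hi2⟩ := hcase2
        have hynorm : 0 < ‖y‖ := lt_of_lt_of_le hi2 ((le_abs_self _).trans (abs_le_norm y i2))
        set c := ‖y‖ with hc
        set yn : Fin n → ℝ := fun i => (1/c) * y i with hyn
        have hcinv : (0:ℝ) ≤ 1/c := by positivity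
        have hnn : ‖yn‖ = 1 := by
          rw [hyn, norm_smul_fn hcinv, ← hc]
          field_simp
        have hynK : yn ∈ K := by
          refine ⟨hnn, ⟨i1, ?_⟩, ⟨i2, ?_⟩⟩
          · rw [hyn]
            exact mul_nonpos_iff.mpr (Or.inl ⟨hcinv, hi1.le⟩)
          · rw [hyn]
            positivity
        have hminy : lam ≤ (volV G w * ‖yn‖ - Iplus G w yn) / Ninf d yn :=
          isMinOn_iff.mp hzmin yn hynK
        have hNyn := hNposK yn hynK
        have h1 : lam * Ninf d yn ≤ volV G w * ‖yn‖ - Iplus G w yn := by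
          calc lam * Ninf d yn ≤ ((volV G w * ‖yn‖ - Iplus G w yn) / Ninf d yn) * Ninf d yn :=
                mul_le_mul_of_nonneg_right hminy (le_of_lt hNyn)
            _ = volV G w * ‖yn‖ - Iplus G w yn := by field_simp
        have hF : volV G w * ‖yn‖ - Iplus G w yn
            = (1/c) * (volV G w * ‖y‖ - Iplus G w y) := by
          rw [hyn, norm_smul_fn hcinv, Iplus_smul hcinv]
          ring
        have hN : Ninf d yn = (1/c) * Ninf d y := Ninf_smul hd' a hcinv
        rw [hF, hN] at h1
        have h2 : c * (lam * ((1/c) * Ninf d y)) = lam * Ninf d y := by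
          field_simp
        have h3 : c * ((1/c) * (volV G w * ‖y‖ - Iplus G w y))
            = volV G w * ‖y‖ - Iplus G w y := by
          field_simp
        calc lam * Ninf d y = c * (lam * ((1/c) * Ninf d y)) := h2.symm
          _ ≤ c * ((1/c) * (volV G w * ‖y‖ - Iplus G w y)) :=
              mul_le_mul_of_nonneg_left h1 hynorm.le
          _ = volV G w * ‖y‖ - Iplus G w y := h3
  -- construct the eigenpair
  obtain ⟨s, hs⟩ := Ninf_subgrad hd a z
  set p : Fin n → ℝ := fun i => ∑ j, if G.Adj i j then w i j * sgn (z i + z j) else 0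
    with hpdef
  have hp : p ∈ subdiff (Iplus G w) z := Iplus_subgrad hsymm hpos z
  set uu : Fin n → ℝ := fun i => (p i + lam * s i) / volV G w with huu
  have hu : uu ∈ subdiff (fun y : Fin n → ℝ => ‖y‖) z := by
    intro y
    have e : ∑ i, uu i * (y i - z i)
        = ((∑ i, p i * (y i - z i)) + lam * ∑ i, s i * (y i - z i)) / volV G w := by
      rw [mul_sum, ← sum_add_distrib, sum_div]
      exact sum_congr rfl fun i _ => by rw [huu]; ring
    rw [e]
    have h1 := hp y
    have h2 := hs y
    have h2' : lam * ∑ i, s i * (y i - z i) ≤ lam * (Ninf d y - Ninf d z) :=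
      mul_le_mul_of_nonneg_left h2 hlampos.le
    have h3 := hglob0 y
    have h4 : (∑ i, p i * (y i - z i)) + lam * ∑ i, s i * (y i - z i)
        ≤ volV G w * ‖y‖ - volV G w * ‖z‖ := by
      have h5 := heqz
      nlinarith [h1, h2', h3, heqz]
    calc ((∑ i, p i * (y i - z i)) + lam * ∑ i, s i * (y i - z i)) / volV G w
        ≤ (volV G w * ‖y‖ - volV G w * ‖z‖) / volV G w := by
          exact div_le_div_of_nonneg_right h4 hvol.le |>.trans_eq rfl
      _ = ‖y‖ - ‖z‖ := by field_simp
  have hz0 : z ≠ 0 := by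
    intro h
    have := hzK.1
    rw [h, norm_zero] at this
    norm_num at this
  have heig : IsEigenStar G w lam z := by
    refine ⟨hz0, uu, hu, p, hp, s, (fun y => hs y), fun i => ?_⟩
    rw [huu]
    field_simp
    ring
  have hmulam : mu ≤ lam := hmin lam z heig hlampos
  intro y
  have h1 := hglob0 y
  have h2 : mu * Ninf d y ≤ lam * Ninf d y :=
    mul_le_mul_of_nonneg_right hmulam (Ninf_nonneg hd')
  have h3 : Nfun G w y = Ninf d y := rfl
  rw [h3]
  linarith


end VCAux

open VCAux in
theorem stmt3 (G : SimpleGraph (Fin n)) [DecidableRel G.Adj] (w : Fin n → Fin n → ℝ)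
    (hsymm : ∀ i j, w i j = w j i)
    (hpos : ∀ i j, G.Adj i j → 0 < w i j)
    (hconn : G.Connected)
    (mu : ℝ) (x : Fin n → ℝ)
    (hx : IsEigenStar G w mu x)
    (hmu : 0 < mu)
    (hmin : ∀ lam : ℝ, ∀ y : Fin n → ℝ, IsEigenStar G w lam y → 0 < lam → mu ≤ lam) :
    ∀ i j, G.Adj i j → x i ≠ 0 ∨ x j ≠ 0 := by
  classical
  intro a b hab
  by_contra hcon
  push_neg at hcon
  obtain ⟨ha0, hb0⟩ := hcon
  have hab' : a ≠ b := G.ne_of_adj hab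
  set d := wdeg G w with hddef
  have hd : ∀ k, 0 < d k := by
    intro k
    rcases eq_or_ne a k with rfl | hk
    · exact wdeg_pos hpos hab
    · obtain ⟨m, hm⟩ := exists_neighbor hconn hk
      exact wdeg_pos hpos hm
  have hd' : ∀ k, 0 ≤ d k := fun k => (hd k).le
  have hvol : 0 < volV G w := sum_pos (fun i _ => hd i) ⟨a, mem_univ a⟩
  obtain ⟨hx0, u, hu, p, hp, s, hs, heq⟩ := hx
  -- pairing identities
  have hun : ∑ i, u i * x i = ‖x‖ :=
    subdiff_pairing hu (norm_smul_fn (by norm_num)) norm_zero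
  have hpn : ∑ i, p i * x i = Iplus G w x :=
    subdiff_pairing hp (Iplus_smul (by norm_num)) Iplus_zero
  have hsn : ∑ i, s i * x i = Nfun G w x :=
    subdiff_pairing hs (Ninf_smul hd' a (by norm_num)) (Ninf_zero hd')
  have hfx : volV G w * ‖x‖ = Iplus G w x + mu * Nfun G w x := by
    have hsum0 : ∑ i, (volV G w * u i - p i - mu * s i) * x i = 0 :=
      sum_eq_zero fun i _ => by rw [heq i]; ring
    have hexp : ∑ i, (volV G w * u i - p i - mu * s i) * x i
        = volV G w * (∑ i, u i * x i) - (∑ i, p i * x i) - mu * (∑ i, s i * x i) := by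
      rw [mul_sum, mul_sum, ← sum_sub_distrib, ← sum_sub_distrib]
      exact sum_congr rfl fun i _ => by ring
    rw [hexp, hun, hpn, hsn] at hsum0
    linarith
  have hglob := global_ineq hsymm hpos hconn hd a b hab mu hmu hmin
  -- perturbation vectors
  set c := ‖x‖ with hc
  have hcpos : 0 < c := by
    rw [hc]
    exact norm_pos_iff.mpr hx0
  set yp : Fin n → ℝ := fun i => if i = a then c else if i = b then c else x i with hypdef
  set ym : Fin n → ℝ := fun i => if i = a then -c else if i = b then -c else x i with hymdef
  have hypa : yp a = c := by simp [hypdef]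
  have hypb : yp b = c := by rw [hypdef]; simp [Ne.symm hab']
  have hyma : ym a = -c := by simp [hymdef]
  have hymb : ym b = -c := by rw [hymdef]; simp [Ne.symm hab']
  have hypnorm : ‖yp‖ = c := by
    refine le_antisymm (norm_le_of hcpos.le fun i => ?_) ?_
    · rw [hypdef]
      by_cases h1 : i = a
      · simp [h1, abs_of_pos hcpos]
      · by_cases h2 : i = b
        · simp [h1, h2, abs_of_pos hcpos]
        · simp only [if_neg h1, if_neg h2]
          rw [hc]
          exact abs_le_norm x i
    · have h := abs_le_norm yp a
      rw [hypa, abs_of_pos hcpos] at h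
      exact h
  have hymnorm : ‖ym‖ = c := by
    refine le_antisymm (norm_le_of hcpos.le fun i => ?_) ?_
    · rw [hymdef]
      by_cases h1 : i = a
      · simp [h1, abs_of_pos hcpos]
      · by_cases h2 : i = b
        · simp [h1, h2, abs_of_pos hcpos]
        · simp only [if_neg h1, if_neg h2]
          rw [hc]
          exact abs_le_norm x i
    · have h := abs_le_norm ym a
      rw [hyma, abs_neg, abs_of_pos hcpos] at h
      exact h
  have hmid : ∀ i, yp i + ym i = 2 * x i := by
    intro i
    rw [hypdef, hymdef]
    by_cases h1 : i = a
    · simp only [if_pos h1]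
      rw [h1, ha0]
      ring
    · by_cases h2 : i = b
      · simp only [if_neg h1, if_pos h2]
        rw [h2, hb0]
        ring
      · simp only [if_neg h1, if_neg h2]
        ring
  -- N midpoint inequality
  have hNfun : ∀ y, Nfun G w y = Ninf d y := fun _ => rfl
  have hNmid : 2 * Nfun G w x ≤ Nfun G w yp + Nfun G w ym := by
    obtain ⟨t1, ht1, -, -⟩ := Ninf_attained hd' a (y := yp)
    obtain ⟨t2, ht2, -, -⟩ := Ninf_attained hd' a (y := ym)
    have hxle : Ninf d x ≤ Phi d x ((t1 + t2)/2) := Ninf_le hd' _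
    have hterm : Phi d x ((t1 + t2)/2) ≤ (Phi d yp t1 + Phi d ym t2)/2 := by
      rw [Phi, Phi, Phi]
      rw [le_div_iff₀ (by norm_num : (0:ℝ) < 2)]
      rw [sum_mul, ← sum_add_distrib]
      refine sum_le_sum fun i _ => ?_
      have habs : |x i - (t1 + t2)/2| * 2 ≤ |yp i - t1| + |ym i - t2| := by
        have hx2 : x i - (t1 + t2)/2 = ((yp i - t1) + (ym i - t2))/2 := by
          have := hmid i
          field_simp
          linarith
        rw [hx2]
        have := abs_add_le (yp i - t1) (ym i - t2)
        rw [abs_div]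
        rw [show |(2:ℝ)| = 2 by norm_num]
        calc |yp i - t1 + (ym i - t2)| / 2 * 2 = |yp i - t1 + (ym i - t2)| := by ring
          _ ≤ |yp i - t1| + |ym i - t2| := abs_add_le _ _
      calc d i * |x i - (t1 + t2)/2| * 2 = d i * (|x i - (t1 + t2)/2| * 2) := by ring
        _ ≤ d i * (|yp i - t1| + |ym i - t2|) := mul_le_mul_of_nonneg_left habs (hd' i)
        _ = d i * |yp i - t1| + d i * |ym i - t2| := by ring
    rw [hNfun x, hNfun yp, hNfun ym, ht1, ht2]
    linarith
  -- Iplus perturbation inequality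
  have hIineq : 2 * Iplus G w x + 2 * (c * w a b) ≤ Iplus G w yp + Iplus G w ym := by
    set g : Fin n → Fin n → ℝ := fun i j =>
      (if G.Adj i j then w i j * |yp i + yp j| else 0)
      + (if G.Adj i j then w i j * |ym i + ym j| else 0)
      - 2 * (if G.Adj i j then w i j * |x i + x j| else 0) with hgdef
    have hgnn : ∀ i j, 0 ≤ g i j := by
      intro i j
      rw [hgdef]
      by_cases h : G.Adj i j
      · simp only [if_pos h]
        have h1 : |2 * (x i + x j)| ≤ |yp i + yp j| + |ym i + ym j| := by
          have e : 2 * (x i + x j) = (yp i + yp j) + (ym i + ym j) := by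
            have := hmid i
            have := hmid j
            linarith
          rw [e]
          exact abs_add_le _ _
        have h2 : |2 * (x i + x j)| = 2 * |x i + x j| := by
          rw [abs_mul]
          norm_num
        have h3 := (hpos i j h).le
        nlinarith
      · simp [h]
    have hgab : 4 * (c * w a b) ≤ g a b := by
      rw [hgdef]
      simp only [if_pos hab]
      rw [hypa, hypb, hyma, hymb, ha0, hb0]
      rw [show c + c = 2 * c by ring, show -c + -c = -(2*c) by ring, abs_neg]
      rw [abs_of_pos (by linarith : (0:ℝ) < 2 * c)]
      rw [show (0:ℝ) + 0 = 0 by ring, abs_zero]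
      nlinarith [hpos a b hab, hcpos]
    have hsum1 : g a b ≤ ∑ j, g a j :=
      single_le_sum (fun j _ => hgnn a j) (mem_univ b)
    have hsum2 : ∑ j, g a j ≤ ∑ i, ∑ j, g i j :=
      single_le_sum (fun i _ => sum_nonneg fun j _ => hgnn i j) (mem_univ a)
    have hinner : ∀ i, ∑ j, g i j
        = (∑ j, (if G.Adj i j then w i j * |yp i + yp j| else 0))
          + (∑ j, (if G.Adj i j then w i j * |ym i + ym j| else 0))
          - 2 * ∑ j, (if G.Adj i j then w i j * |x i + x j| else 0) := by
      intro i
      calc ∑ j, g i j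
          = ∑ j, (((if G.Adj i j then w i j * |yp i + yp j| else 0)
            + (if G.Adj i j then w i j * |ym i + ym j| else 0))
            - 2 * (if G.Adj i j then w i j * |x i + x j| else 0)) :=
            sum_congr rfl fun j _ => rfl
        _ = (∑ j, ((if G.Adj i j then w i j * |yp i + yp j| else 0)
            + (if G.Adj i j then w i j * |ym i + ym j| else 0)))
            - ∑ j, 2 * (if G.Adj i j then w i j * |x i + x j| else 0) := sum_sub_distrib _ _
        _ = (∑ j, (if G.Adj i j then w i j * |yp i + yp j| else 0))
            + (∑ j, (if G.Adj i j then w i j * |ym i + ym j| else 0))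
            - 2 * ∑ j, (if G.Adj i j then w i j * |x i + x j| else 0) := by
            rw [sum_add_distrib, ← mul_sum]
    have houter : ∑ i, ∑ j, g i j
        = (∑ i, ∑ j, (if G.Adj i j then w i j * |yp i + yp j| else 0))
          + (∑ i, ∑ j, (if G.Adj i j then w i j * |ym i + ym j| else 0))
          - 2 * ∑ i, ∑ j, (if G.Adj i j then w i j * |x i + x j| else 0) := by
      calc ∑ i, ∑ j, g i j
          = ∑ i, ((∑ j, (if G.Adj i j then w i j * |yp i + yp j| else 0))
            + (∑ j, (if G.Adj i j then w i j * |ym i + ym j| else 0))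
            - 2 * ∑ j, (if G.Adj i j then w i j * |x i + x j| else 0)) :=
            sum_congr rfl fun i _ => hinner i
        _ = (∑ i, ((∑ j, (if G.Adj i j then w i j * |yp i + yp j| else 0))
            + (∑ j, (if G.Adj i j then w i j * |ym i + ym j| else 0))))
            - ∑ i, 2 * ∑ j, (if G.Adj i j then w i j * |x i + x j| else 0) := sum_sub_distrib _ _
        _ = (∑ i, ∑ j, (if G.Adj i j then w i j * |yp i + yp j| else 0))
            + (∑ i, ∑ j, (if G.Adj i j then w i j * |ym i + ym j| else 0))
            - 2 * ∑ i, ∑ j, (if G.Adj i j then w i j * |x i + x j| else 0) := by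
            rw [sum_add_distrib, ← mul_sum]
    have hIp : (∑ i, ∑ j, (if G.Adj i j then w i j * |yp i + yp j| else 0))
        = 2 * Iplus G w yp := by rw [Iplus]; ring
    have hIm : (∑ i, ∑ j, (if G.Adj i j then w i j * |ym i + ym j| else 0))
        = 2 * Iplus G w ym := by rw [Iplus]; ring
    have hIx : (∑ i, ∑ j, (if G.Adj i j then w i j * |x i + x j| else 0))
        = 2 * Iplus G w x := by rw [Iplus]; ring
    rw [hIp, hIm, hIx] at houter
    linarith [hsum1, hsum2, houter, hgab]
  -- conclude
  have hgyp := hglob yp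
  have hgym := hglob ym
  rw [hypnorm] at hgyp
  rw [hymnorm] at hgym
  have hmuN : mu * (2 * Nfun G w x) ≤ mu * (Nfun G w yp + Nfun G w ym) :=
    mul_le_mul_of_nonneg_left hNmid hmu.le
  have hcw : 0 < c * w a b := mul_pos hcpos (hpos a b hab)
  linarith [hgyp, hgym, hmuN, hIineq, hfx, hcw]
end
end

section
/- Let Ω ⊆ ℝⁿ be a nonempty compact set and let f₁, f₂, g₁, g₂ : ℝⁿ → ℝ be continuous functions such that g₁(x) − g₂(x) > 0 for all x ∈ Ω. Define Q(x) = (f₁(x) − f₂(x)) / (g₁(x) − g₂(x)) and q* = min_{x∈Ω} Q(x). Given any x⁰ ∈ Ω, set r⁰ = Q(x⁰), and define iteratively x^{k+1} ∈ argmin_{x∈Ω} { f₁(x) + r^k·g₂(x) − f₂(x) − r^k·g₁(x) } and r^{k+1} = Q(x^{k+1}). Then the sequence (r^k) is nonincreasing, bounded below by q*, and converges to q*. -/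
/-!
Write `F = f₁ - f₂`, `G = g₁ - g₂`. Since `r^k G(x^k) = F(x^k)`, the value of the `k`-th
subproblem at its minimizer is `(r^{k+1} - r^k) G(x^{k+1})`, and it is at most the value
`0` at `x^k` and at most `(q* - r^k) G(x*)` at a minimizer `x*` of `Q`. The first bound gives
monotonicity. With `M` an upper bound of `G` on the compact set `Ω`, the second gives
`r^{k+1} - q* ≤ (1 - G(x*)/M) (r^k - q*)`, so `r^k → q*` linearly.
-/

open Filter Topology

theorem tendsto_of_sub_le_mul_sub {u : ℕ → ℝ} {q c : ℝ} (hc₀ : 0 ≤ c) (hc₁ : c < 1)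
    (hq : ∀ k, q ≤ u k) (hu : ∀ k, u (k + 1) - q ≤ c * (u k - q)) :
    Tendsto u atTop (𝓝 q) := by
  have hgeom : ∀ k, u k ≤ q + c ^ k * (u 0 - q) := fun k => by
    have := le_geom (u := fun k => u k - q) hc₀ k fun j _ => hu j
    linarith
  have hlim : Tendsto (fun k => q + c ^ k * (u 0 - q)) atTop (𝓝 q) := by
    simpa using
      ((tendsto_pow_atTop_nhds_zero_of_lt_one hc₀ hc₁).mul_const (u 0 - q)).const_add q
  exact tendsto_of_tendsto_of_tendsto_of_le_of_le tendsto_const_nhds hlim hq hgeom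

structure IsDinkelbachSeq {α : Type*} (s : Set α) (F G : α → ℝ) (x : ℕ → α) (r : ℕ → ℝ) :
    Prop where
  mem : ∀ k, x k ∈ s
  ratio : ∀ k, r k = F (x k) / G (x k)
  isMinOn : ∀ k, IsMinOn (fun y => F y - r k * G y) s (x (k + 1))

namespace IsDinkelbachSeq

variable {α : Type*} {s : Set α} {F G : α → ℝ} {x : ℕ → α} {r : ℕ → ℝ}

theorem mul_eq (h : IsDinkelbachSeq s F G x r) (hG : ∀ y ∈ s, 0 < G y) (k : ℕ) :
    r k * G (x k) = F (x k) := by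
  rw [h.ratio k, div_mul_cancel₀ _ (hG _ (h.mem k)).ne']

theorem succ_sub_mul_le (h : IsDinkelbachSeq s F G x r) (hG : ∀ y ∈ s, 0 < G y) (k : ℕ)
    {y : α} (hy : y ∈ s) : (r (k + 1) - r k) * G (x (k + 1)) ≤ F y - r k * G y := by
  have hmin := isMinOn_iff.1 (h.isMinOn k) y hy
  have := h.mul_eq hG (k + 1)
  linarith

theorem antitone (h : IsDinkelbachSeq s F G x r) (hG : ∀ y ∈ s, 0 < G y) : Antitone r := by
  refine antitone_nat_of_succ_le fun k => ?_
  have hstep := h.succ_sub_mul_le hG k (h.mem k)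
  rw [h.mul_eq hG k, sub_self] at hstep
  exact sub_nonpos.1 (nonpos_of_mul_nonpos_left hstep (hG _ (h.mem (k + 1))))

theorem le_of_isLeast (h : IsDinkelbachSeq s F G x r) {q : ℝ}
    (hq : IsLeast ((fun y => F y / G y) '' s) q) (k : ℕ) : q ≤ r k :=
  hq.2 ⟨x k, h.mem k, (h.ratio k).symm⟩

theorem succ_sub_le_mul_sub (h : IsDinkelbachSeq s F G x r) (hG : ∀ y ∈ s, 0 < G y)
    {M : ℝ} (hGM : ∀ y ∈ s, G y ≤ M) {xstar : α} (hxstar : xstar ∈ s) (k : ℕ) :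
    r (k + 1) - F xstar / G xstar ≤ (1 - G xstar / M) * (r k - F xstar / G xstar) := by
  set q := F xstar / G xstar
  have hGstar := hG xstar hxstar
  have hM : 0 < M := hGstar.trans_le (hGM xstar hxstar)
  have hFstar : F xstar = q * G xstar := (div_mul_cancel₀ _ hGstar.ne').symm
  have hdec : 0 ≤ r k - r (k + 1) := sub_nonneg.2 (h.antitone hG k.le_succ)
  have hstep := h.succ_sub_mul_le hG k hxstar
  have hbound : (r k - q) * G xstar ≤ (r k - r (k + 1)) * M :=
    calc (r k - q) * G xstar ≤ (r k - r (k + 1)) * G (x (k + 1)) := by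
          rw [hFstar] at hstep; linarith
      _ ≤ (r k - r (k + 1)) * M := mul_le_mul_of_nonneg_left (hGM _ (h.mem _)) hdec
  have : (r k - q) * (G xstar / M) ≤ r k - r (k + 1) := by
    rw [mul_div_assoc', div_le_iff₀ hM]; exact hbound
  linarith

theorem tendsto (h : IsDinkelbachSeq s F G x r) (hG : ∀ y ∈ s, 0 < G y) {M : ℝ}
    (hGM : ∀ y ∈ s, G y ≤ M) {q : ℝ} (hq : IsLeast ((fun y => F y / G y) '' s) q) :
    Tendsto r atTop (𝓝 q) := by
  obtain ⟨xstar, hxstar, rfl⟩ := hq.1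
  have hGstar := hG xstar hxstar
  have hM : 0 < M := hGstar.trans_le (hGM xstar hxstar)
  refine tendsto_of_sub_le_mul_sub (c := 1 - G xstar / M) ?_ ?_ (h.le_of_isLeast hq)
    (h.succ_sub_le_mul_sub hG hGM hxstar)
  · linarith [(div_le_one hM).2 (hGM xstar hxstar)]
  · linarith [div_pos hGstar hM]

end IsDinkelbachSeq

theorem stmt19_general {n : ℕ} (Ω : Set (Fin n → ℝ)) (hcomp : IsCompact Ω)
    (f₁ f₂ g₁ g₂ : (Fin n → ℝ) → ℝ)
    (hg₁ : Continuous g₁) (hg₂ : Continuous g₂)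
    (hg : ∀ x ∈ Ω, 0 < g₁ x - g₂ x)
    (Q : (Fin n → ℝ) → ℝ) (hQ : ∀ x, Q x = (f₁ x - f₂ x) / (g₁ x - g₂ x))
    (qstar : ℝ) (hq : IsLeast (Q '' Ω) qstar)
    (x : ℕ → (Fin n → ℝ)) (r : ℕ → ℝ)
    (hx0 : x 0 ∈ Ω) (hr0 : r 0 = Q (x 0))
    (hmem : ∀ k, x (k + 1) ∈ Ω)
    (hargmin : ∀ k, ∀ y ∈ Ω,
      f₁ (x (k + 1)) + r k * g₂ (x (k + 1)) - f₂ (x (k + 1)) - r k * g₁ (x (k + 1)) ≤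
        f₁ y + r k * g₂ y - f₂ y - r k * g₁ y)
    (hr : ∀ k, r (k + 1) = Q (x (k + 1))) :
    (∀ k, r (k + 1) ≤ r k) ∧ (∀ k, qstar ≤ r k) ∧
      Filter.Tendsto r Filter.atTop (nhds qstar) := by
  obtain rfl : Q = fun x => (f₁ x - f₂ x) / (g₁ x - g₂ x) := funext hQ
  have hseq : IsDinkelbachSeq Ω (fun y => f₁ y - f₂ y) (fun y => g₁ y - g₂ y) x r :=
    { mem := fun k => Nat.casesOn k hx0 hmem
      ratio := fun k => Nat.casesOn k hr0 hr
      isMinOn := fun k => isMinOn_iff.2 fun y hy => by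
        have := hargmin k y hy
        linarith }
  obtain ⟨M, hM⟩ := hcomp.bddAbove_image (hg₁.sub hg₂).continuousOn
  exact ⟨fun k => hseq.antitone hg k.le_succ, hseq.le_of_isLeast hq,
    hseq.tendsto hg (fun y hy => hM ⟨y, hy, rfl⟩) hq⟩

/-- Dinkelbach's two-step iterative scheme for the fractional program
`min_{x ∈ Ω} (f₁(x) − f₂(x)) / (g₁(x) − g₂(x))`: the sequence of ratios `r^k` is
nonincreasing, bounded below by the optimal value `q*`, and converges to `q*`. -/
theorem stmt19 {n : ℕ} (Ω : Set (Fin n → ℝ)) (hne : Ω.Nonempty) (hcomp : IsCompact Ω)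
    (f₁ f₂ g₁ g₂ : (Fin n → ℝ) → ℝ)
    (hf₁ : Continuous f₁) (hf₂ : Continuous f₂)
    (hg₁ : Continuous g₁) (hg₂ : Continuous g₂)
    (hg : ∀ x ∈ Ω, 0 < g₁ x - g₂ x)
    (Q : (Fin n → ℝ) → ℝ) (hQ : ∀ x, Q x = (f₁ x - f₂ x) / (g₁ x - g₂ x))
    (qstar : ℝ) (hq : IsLeast (Q '' Ω) qstar)
    (x : ℕ → (Fin n → ℝ)) (r : ℕ → ℝ)
    (hx0 : x 0 ∈ Ω) (hr0 : r 0 = Q (x 0))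
    (hmem : ∀ k, x (k + 1) ∈ Ω)
    (hargmin : ∀ k, ∀ y ∈ Ω,
      f₁ (x (k + 1)) + r k * g₂ (x (k + 1)) - f₂ (x (k + 1)) - r k * g₁ (x (k + 1)) ≤
        f₁ y + r k * g₂ y - f₂ y - r k * g₁ y)
    (hr : ∀ k, r (k + 1) = Q (x (k + 1))) :
    (∀ k, r (k + 1) ≤ r k) ∧ (∀ k, qstar ≤ r k) ∧
      Filter.Tendsto r Filter.atTop (nhds qstar) :=
  stmt19_general Ω hcomp f₁ f₂ g₁ g₂ hg₁ hg₂ hg Q hQ qstar hq x r hx0 hr0 hmem hargmin hr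
end
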